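/- arXiv:1908.09814 — 7 statements merged into one kernel-verified Lean document; each statement's English description precedes it below -/
import Mathlib

section
/- Let n ≥ 1, let X ⊆ ℝⁿ be a nonempty closed set, and let p ∈ ℝⁿ \ X. Then the distance function d_X is (Fréchet) differentiable at p if and only if p has a unique nearest point in X (i.e., there is exactly one x⁰ ∈ X with ‖p − x⁰‖ = d_X(p)). -/
/-!
Along the segment from `p` to a footprint `x`, `d_X` decreases linearly with slope `-d_X p`, so
the derivative `L` of `d_X` at `p`, which has norm at most one since `d_X` is 1-Lipschitz,
satisfies `L (x - p) = -d_X p`. Two footprints `x`, `y` then give equality in the triangle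
inequality for `(x - p) + (y - p)`, which forces `x = y` by strict convexity.

Conversely, if `z` is the only footprint, `d_X` is bounded above by `‖· - z‖` and, through a
footprint `x_q` of `q`, below by `d_X p + ⟪(p - x_q) / ‖p - x_q‖, q - p⟫`. By compactness
`x_q → z` as `q → p`, so both bounds are tangent at `p` to `d_X p + ⟪(p - z) / ‖p - z‖, · - p⟫`.
-/

open Metric Set Filter Asymptotics AffineMap
open scoped RealInnerProductSpace Topology

section NormedSpace

variable {E : Type*} [NormedAddCommGroup E] [NormedSpace ℝ E] {X : Set E} {p x : E}

theorem infDist_lineMap_of_dist_eq_infDist (hx : x ∈ X) (hpx : dist p x = infDist p X) {t : ℝ}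
    (ht : t ∈ Icc (0 : ℝ) 1) : infDist (lineMap p x t) X = (1 - t) * infDist p X := by
  have hdist_left : dist p (lineMap p x t) = t * infDist p X := by
    rw [dist_left_lineMap, Real.norm_of_nonneg ht.1, hpx]
  have hdist_right : dist (lineMap p x t) x = (1 - t) * infDist p X := by
    rw [dist_lineMap_right, Real.norm_of_nonneg (sub_nonneg.2 ht.2), hpx]
  have hle := infDist_le_dist_of_mem (x := lineMap p x t) hx
  have hge := infDist_le_infDist_add_dist (x := p) (y := lineMap p x t) (s := X)
  linarith

theorem fderiv_infDist_apply_sub_of_dist_eq_infDist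
    (hdiff : DifferentiableAt ℝ (infDist · X) p) (hx : x ∈ X) (hpx : dist p x = infDist p X) :
    fderiv ℝ (infDist · X) p (x - p) = -infDist p X := by
  have hchain : HasDerivAt (fun t : ℝ => infDist (lineMap p x t) X)
      (fderiv ℝ (infDist · X) p (x - p)) 0 :=
    hdiff.hasFDerivAt.comp_hasDerivAt_of_eq 0 hasDerivAt_lineMap (lineMap_apply_zero p x).symm
  have hlinear : HasDerivWithinAt (fun t : ℝ => infDist (lineMap p x t) X)
      (-infDist p X) (Icc 0 1) 0 := by
    have : HasDerivWithinAt (fun t : ℝ => (1 - t) * infDist p X) (-infDist p X) (Icc 0 1) 0 := by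
      simpa using ((hasDerivAt_id (0 : ℝ)).const_sub 1).mul_const (infDist p X) |>.hasDerivWithinAt
    exact this.congr_of_mem (fun t ht => infDist_lineMap_of_dist_eq_infDist hx hpx ht)
      ⟨le_rfl, zero_le_one⟩
  exact (uniqueDiffOn_Icc zero_lt_one 0 ⟨le_rfl, zero_le_one⟩).eq_deriv _
    hchain.hasDerivWithinAt hlinear

theorem eq_of_dist_eq_infDist_of_differentiableAt [StrictConvexSpace ℝ E]
    (hdiff : DifferentiableAt ℝ (infDist · X) p) {y : E} (hx : x ∈ X) (hy : y ∈ X)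
    (hpx : dist p x = infDist p X) (hpy : dist p y = infDist p X) : x = y := by
  set L := fderiv ℝ (infDist · X) p
  have hL : ‖L‖ ≤ 1 := by
    simpa using norm_fderiv_le_of_lipschitz ℝ (x₀ := p) (lipschitz_infDist_pt X)
  have hnx : ‖x - p‖ = infDist p X := by rw [← dist_eq_norm', hpx]
  have hny : ‖y - p‖ = infDist p X := by rw [← dist_eq_norm', hpy]
  have hsum : L ((x - p) + (y - p)) = -(2 * infDist p X) := by
    rw [map_add, fderiv_infDist_apply_sub_of_dist_eq_infDist hdiff hx hpx,
      fderiv_infDist_apply_sub_of_dist_eq_infDist hdiff hy hpy]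
    ring
  have hge : 2 * infDist p X ≤ ‖(x - p) + (y - p)‖ :=
    calc 2 * infDist p X = ‖L ((x - p) + (y - p))‖ := by
          rw [hsum, norm_neg, Real.norm_of_nonneg (by linarith [infDist_nonneg (x := p) (s := X)])]
      _ ≤ ‖L‖ * ‖(x - p) + (y - p)‖ := L.le_opNorm _
      _ ≤ ‖(x - p) + (y - p)‖ := mul_le_of_le_one_left (norm_nonneg _) hL
  have hadd : ‖(x - p) + (y - p)‖ = ‖x - p‖ + ‖y - p‖ :=
    le_antisymm (norm_add_le _ _) (by linarith)
  simpa using eq_of_norm_eq_of_norm_add_eq (hnx.trans hny.symm) hadd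

end NormedSpace

theorem tendsto_of_infDist_eq_dist_of_unique {α : Type*} [PseudoMetricSpace α] [ProperSpace α]
    {X : Set α} (hX : IsClosed X) {f : α → α} (hf : ∀ q, f q ∈ X ∧ infDist q X = dist q (f q))
    {p z : α} (huniq : ∀ a ∈ X, dist p a = infDist p X → a = z) : Tendsto f (𝓝 p) (𝓝 z) := by
  have hball : ∀ ε > 0, ∀ᶠ q in 𝓝 p, f q ∈ closedBall p (infDist p X + ε) := by
    intro ε hε
    filter_upwards [ball_mem_nhds p (half_pos hε)] with q hq
    rw [mem_ball, dist_comm] at hq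
    rw [mem_closedBall, dist_comm]
    calc dist p (f q) ≤ dist p q + infDist q X := (hf q).2 ▸ dist_triangle p q (f q)
      _ ≤ dist p q + (infDist p X + dist q p) := by gcongr; exact infDist_le_infDist_add_dist
      _ ≤ infDist p X + ε := by rw [dist_comm q p]; linarith
  have hmem : ∀ C, IsClosed C → (∀ᶠ q in 𝓝 p, f q ∈ C) → ∀ a, MapClusterPt a (𝓝 p) f → a ∈ C :=
    fun C hC hfC a ha =>
      hC.closure_subset (mem_closure_iff_clusterPt.2 (ClusterPt.mono ha (le_principal_iff.2 hfC)))
  refine (isCompact_closedBall p (infDist p X + 1)).tendsto_nhds_of_unique_mapClusterPt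
    (hball 1 one_pos) fun a _ ha => ?_
  have haX : a ∈ X := hmem X hX (Eventually.of_forall fun q => (hf q).1) a ha
  refine huniq a haX (le_antisymm (le_of_forall_pos_le_add fun ε hε => ?_)
    (infDist_le_dist_of_mem haX))
  simpa [dist_comm] using hmem _ isClosed_closedBall (hball ε hε) a ha

section InnerProductSpace

variable {E : Type*} [NormedAddCommGroup E] [InnerProductSpace ℝ E] {X : Set E} {p x z : E}

theorem hasFDerivAt_norm_sub (hne : p ≠ z) :
    HasFDerivAt (fun q => ‖q - z‖) (‖p - z‖⁻¹ • innerSL ℝ (p - z)) p := by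
  have hpz : ‖p - z‖ ≠ 0 := norm_ne_zero_iff.2 (sub_ne_zero.2 hne)
  have hsqrt := ((hasFDerivAt_id p).sub_const z).norm_sq.sqrt (pow_ne_zero 2 hpz)
  simp only [Real.sqrt_sq (norm_nonneg _), _root_.id] at hsqrt
  convert hsqrt using 1
  ext w
  simp only [smul_apply, coe_innerSL_apply, smul_eq_mul, one_div, mul_inv_rev,
    ContinuousLinearMap.comp_id, nsmul_eq_mul, Nat.cast_ofNat]
  field_simp

theorem infDist_add_inner_le_dist (hx : x ∈ X) (q : E) :
    infDist p X + ⟪‖p - x‖⁻¹ • (p - x), q - p⟫ ≤ dist q x := by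
  set v := ‖p - x‖⁻¹ • (p - x)
  have hv : ‖v‖ ≤ 1 := by
    rw [norm_smul, norm_inv, norm_norm]
    exact inv_mul_le_one
  have hvpx : ⟪v, p - x⟫ = ‖p - x‖ := by
    rw [real_inner_smul_left, real_inner_self_eq_norm_sq, sq, ← mul_assoc, inv_mul_mul_self]
  calc infDist p X + ⟪v, q - p⟫ ≤ ‖p - x‖ + ⟪v, q - p⟫ := by
        rw [← dist_eq_norm]; gcongr; exact infDist_le_dist_of_mem hx
    _ = ⟪v, q - x⟫ := by rw [← hvpx, ← inner_add_right, sub_add_sub_cancel']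
    _ ≤ ‖v‖ * ‖q - x‖ := real_inner_le_norm _ _
    _ ≤ dist q x := by rw [dist_eq_norm]; exact mul_le_of_le_one_left (norm_nonneg _) hv

theorem hasFDerivAt_infDist_of_tendsto {f : E → E} (hz : z ∈ X) (hpz : dist p z = infDist p X)
    (hne : p ≠ z) (hf : ∀ q, f q ∈ X ∧ infDist q X = dist q (f q))
    (hlim : Tendsto f (𝓝 p) (𝓝 z)) :
    HasFDerivAt (infDist · X) (‖p - z‖⁻¹ • innerSL ℝ (p - z)) p := by
  set u := ‖p - z‖⁻¹ • (p - z)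
  have hL : ∀ w, (‖p - z‖⁻¹ • innerSL ℝ (p - z)) w = ⟪u, w⟫ := fun w => by
    simp only [u, smul_apply, innerSL_apply_apply, smul_eq_mul,
      real_inner_smul_left]
  have hunit : Tendsto (fun q => ‖p - f q‖⁻¹ • (p - f q)) (𝓝 p) (𝓝 u) := by
    have hsub := tendsto_const_nhds (x := p).sub hlim
    exact (hsub.norm.inv₀ (norm_ne_zero_iff.2 (sub_ne_zero.2 hne))).smul hsub
  refine .of_isLittleO (isLittleO_iff.2 fun c hc => ?_)
  filter_upwards [isLittleO_iff.1 (hasFDerivAt_norm_sub hne).isLittleO hc,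
    Metric.tendsto_nhds.1 hunit c hc] with q hnorm hclose
  rw [Real.norm_eq_abs, abs_le, hL]
  rw [Real.norm_eq_abs, abs_le, hL] at hnorm
  rw [dist_eq_norm] at hclose
  constructor
  · have hlow := infDist_add_inner_le_dist (p := p) (hf q).1 q
    have herr : -(c * ‖q - p‖) ≤ ⟪‖p - f q‖⁻¹ • (p - f q) - u, q - p⟫ :=
      calc -(c * ‖q - p‖) ≤ -(‖‖p - f q‖⁻¹ • (p - f q) - u‖ * ‖q - p‖) := by
            gcongr
        _ ≤ _ := neg_le_of_abs_le (abs_real_inner_le_norm _ _)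
    rw [inner_sub_left] at herr
    rw [(hf q).2]
    linarith
  · have hup : infDist q X ≤ ‖q - z‖ := dist_eq_norm q z ▸ infDist_le_dist_of_mem hz
    rw [← hpz, dist_eq_norm]
    linarith

theorem hasFDerivAt_infDist_of_unique [ProperSpace E] (hX : IsClosed X) (hp : p ∉ X)
    (hz : z ∈ X) (hpz : dist p z = infDist p X) (huniq : ∀ a ∈ X, dist p a = infDist p X → a = z) :
    HasFDerivAt (infDist · X) (‖p - z‖⁻¹ • innerSL ℝ (p - z)) p := by
  choose f hfX hfdist using fun q => hX.exists_infDist_eq_dist ⟨z, hz⟩ q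
  have hf q : f q ∈ X ∧ infDist q X = dist q (f q) := ⟨hfX q, hfdist q⟩
  exact hasFDerivAt_infDist_of_tendsto hz hpz (fun h => hp (h ▸ hz)) hf
    (tendsto_of_infDist_eq_dist_of_unique hX hf huniq)

end InnerProductSpace

theorem distance_function_differentiable_iff_unique_footprint_general
    (n : ℕ) (X : Set (EuclideanSpace ℝ (Fin n))) (hXne : X.Nonempty)
    (hXcl : IsClosed X) (p : EuclideanSpace ℝ (Fin n)) (hp : p ∉ X) :
    DifferentiableAt ℝ (fun q => Metric.infDist q X) p ↔
      ∃! x₀, x₀ ∈ X ∧ ‖p - x₀‖ = Metric.infDist p X := by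
  simp only [← dist_eq_norm]
  constructor
  · intro hdiff
    obtain ⟨x₀, hx₀, hpx₀⟩ := hXcl.exists_infDist_eq_dist hXne p
    exact ⟨x₀, ⟨hx₀, hpx₀.symm⟩, fun y ⟨hy, hpy⟩ =>
      eq_of_dist_eq_infDist_of_differentiableAt hdiff hy hx₀ hpy hpx₀.symm⟩
  · rintro ⟨z, ⟨hz, hpz⟩, huniq⟩
    exact (hasFDerivAt_infDist_of_unique hXcl hp hz hpz
      fun a ha hpa => huniq a ⟨ha, hpa⟩).differentiableAt

/-- For a nonempty closed set `X ⊆ ℝⁿ` and a point `p ∉ X`, the distance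
function `d_X` is (Fréchet) differentiable at `p` if and only if `p` has a unique nearest
point in `X`. -/
theorem distance_function_differentiable_iff_unique_footprint
    (n : ℕ) (hn : 1 ≤ n) (X : Set (EuclideanSpace ℝ (Fin n))) (hXne : X.Nonempty)
    (hXcl : IsClosed X) (p : EuclideanSpace ℝ (Fin n)) (hp : p ∉ X) :
    DifferentiableAt ℝ (fun q => Metric.infDist q X) p ↔
      ∃! x₀, x₀ ∈ X ∧ ‖p - x₀‖ = Metric.infDist p X :=
  distance_function_differentiable_iff_unique_footprint_general n X hXne hXcl p hp
end

section
/- Let n ≥ 1, let X ⊆ ℝⁿ be a nonempty closed set, and let p ∈ ℝⁿ \ X. If d_X is differentiable at p, then p has a unique nearest point p⁰ in X and the gradient satisfies ∇d_X(p) = (p − p⁰)/‖p − p⁰‖; in particular ‖∇d_X(p)‖ = 1. -/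
/-!
If `y ∈ X` is a nearest point of `p`, the function `q ↦ ‖q - y‖` dominates the distance function
and touches it at `p`. Where the distance function is differentiable, the two gradients must
therefore agree, so it is the unit vector `(p - y) / ‖p - y‖`. Two nearest points lie at the same
distance and give the same unit vector, hence coincide.
-/

open Metric InnerProductSpace Filter Topology

section

variable {E : Type*} [NormedAddCommGroup E] [InnerProductSpace ℝ E] [CompleteSpace E]

theorem hasGradientAt_norm_sub {x y : E} (hxy : x ≠ y) :
    HasGradientAt (fun q => ‖q - y‖) (‖x - y‖⁻¹ • (x - y)) x := by
  have hsq : HasFDerivAt (fun q => ‖q - y‖ ^ 2) (2 • innerSL ℝ (x - y)) x := by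
    simpa using ((hasFDerivAt_id x).sub_const y).norm_sq
  have hsqrt := hsq.sqrt (by simpa [sub_eq_zero] using hxy)
  simp only [Real.sqrt_sq (norm_nonneg _)] at hsqrt
  refine hasGradientAt_iff_hasFDerivAt.mpr (hsqrt.congr_fderiv ?_)
  ext v
  simp only [one_div, mul_inv_rev, map_sub, smul_apply, sub_apply, coe_innerSL_apply,
    nsmul_eq_mul, Nat.cast_ofNat, smul_eq_mul, map_smul, toDual_apply_apply]
  field_simp

theorem HasGradientAt.eq_of_eventuallyLE_of_eq {f g : E → ℝ} {f' g' a : E}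
    (hf : HasGradientAt f f' a) (hg : HasGradientAt g g' a) (hle : f ≤ᶠ[𝓝 a] g)
    (heq : f a = g a) : f' = g' := by
  have hmax : IsLocalMax (f - g) a := by
    filter_upwards [hle] with q hq
    simpa [heq] using hq
  have hzero := hmax.hasFDerivAt_eq_zero (hf.hasFDerivAt.sub hg.hasFDerivAt)
  exact (toDual ℝ E).injective (sub_eq_zero.mp hzero)

theorem gradient_infDist_eq_of_norm_sub_eq_infDist {X : Set E} {p y : E}
    (hdiff : DifferentiableAt ℝ (infDist · X) p) (hy : y ∈ X) (hpy : p ≠ y)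
    (hnear : ‖p - y‖ = infDist p X) :
    gradient (infDist · X) p = ‖p - y‖⁻¹ • (p - y) :=
  hdiff.hasGradientAt.eq_of_eventuallyLE_of_eq (hasGradientAt_norm_sub hpy)
    (Eventually.of_forall fun q => by simpa [dist_eq_norm] using infDist_le_dist_of_mem hy)
    hnear.symm

end

theorem gradient_of_distance_function_general
    (n : ℕ) (X : Set (EuclideanSpace ℝ (Fin n))) (hXne : X.Nonempty)
    (hXcl : IsClosed X) (p : EuclideanSpace ℝ (Fin n)) (hp : p ∉ X)
    (hdiff : DifferentiableAt ℝ (fun q => Metric.infDist q X) p) :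
    ∃ p₀, (p₀ ∈ X ∧ ‖p - p₀‖ = Metric.infDist p X) ∧
      (∀ y, (y ∈ X ∧ ‖p - y‖ = Metric.infDist p X) → y = p₀) ∧
      gradient (fun q => Metric.infDist q X) p = ‖p - p₀‖⁻¹ • (p - p₀) ∧
      ‖gradient (fun q => Metric.infDist q X) p‖ = 1 := by
  have hne : ∀ y ∈ X, p ≠ y := fun y hy hpy => hp (hpy ▸ hy)
  obtain ⟨p₀, hp₀, hdist⟩ := hXcl.exists_infDist_eq_dist hXne p
  have hnear₀ : ‖p - p₀‖ = infDist p X := by rw [hdist, dist_eq_norm]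
  have hd : ‖p - p₀‖ ≠ 0 := norm_ne_zero_iff.mpr (sub_ne_zero.mpr (hne p₀ hp₀))
  have hgrad₀ := gradient_infDist_eq_of_norm_sub_eq_infDist hdiff hp₀ (hne p₀ hp₀) hnear₀
  refine ⟨p₀, ⟨hp₀, hnear₀⟩, ?_, hgrad₀, ?_⟩
  · rintro y ⟨hy, hnear⟩
    have hgrad := gradient_infDist_eq_of_norm_sub_eq_infDist hdiff hy (hne y hy) hnear
    rw [hgrad₀, hnear, ← hnear₀] at hgrad
    exact sub_right_injective (smul_right_injective _ (inv_ne_zero hd) hgrad.symm)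
  · rw [hgrad₀, norm_smul, norm_inv, norm_norm, inv_mul_cancel₀ hd]

/-- If the distance function of a nonempty closed set `X ⊆ ℝⁿ` is
differentiable at `p ∉ X`, then `p` has a unique nearest point `p₀` in `X`, and the gradient
of the distance function at `p` is `(p - p₀)/‖p - p₀‖`; in particular it has norm one. -/
theorem gradient_of_distance_function
    (n : ℕ) (hn : 1 ≤ n) (X : Set (EuclideanSpace ℝ (Fin n))) (hXne : X.Nonempty)
    (hXcl : IsClosed X) (p : EuclideanSpace ℝ (Fin n)) (hp : p ∉ X)
    (hdiff : DifferentiableAt ℝ (fun q => Metric.infDist q X) p) :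
    ∃ p₀, (p₀ ∈ X ∧ ‖p - p₀‖ = Metric.infDist p X) ∧
      (∀ y, (y ∈ X ∧ ‖p - y‖ = Metric.infDist p X) → y = p₀) ∧
      gradient (fun q => Metric.infDist q X) p = ‖p - p₀‖⁻¹ • (p - p₀) ∧
      ‖gradient (fun q => Metric.infDist q X) p‖ = 1 :=
  gradient_of_distance_function_general n X hXne hXcl p hp hdiff
end

section
/- Let n ≥ 2 and let A be the n×n real symmetric matrix whose (n−1)×(n−1) leading principal submatrix is diagonal with diagonal entries b₁, …, b_{n−1}, whose last column (and row) has entries A_{in} = A_{ni} = a_i for i < n, and A_{nn} = a. Let Ā = (ā_{ij}) denote the cofactor matrix of A (so ā_{ij} is (−1)^{i+j} times the minor obtained by deleting row i and column j). Then: (i) ā_{in} = −a_i ∏_{ℓ<n, ℓ≠i} b_ℓ for i < n; (ii) ā_{ij} = a_i a_j ∏_{ℓ<n, ℓ≠i,j} b_ℓ for i, j < n with i ≠ j; (iii) ā_{ii} = a ∏_{ℓ<n, ℓ≠i} b_ℓ − Σ_{k<n, k≠i} a_k² ∏_{ℓ<n, ℓ≠k,i} b_ℓ for i < n; and (iv)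 det(A) = a ∏_{ℓ<n} b_ℓ − Σ_{k<n} a_k² ∏_{ℓ<n, ℓ≠k} b_ℓ. -/
/-!
Every cofactor of `A` is the determinant of `A` with one row replaced by a standard basis vector
(`Matrix.adjugate_apply`), so no signs need to be tracked. In the arrowhead matrix
`[[diagonal b, c], [r, s]]`, replacing block row `k` by `e_last` or by `e_k` gives again an
arrowhead matrix, with `(b k, c k)` changed to `(0, 1)` or `(1, 0)`; the determinant of an
arrowhead matrix follows by expanding along the last row. The off-diagonal cofactors reduce to
these: split block row `j = b j • e_j + c j • e_last` linearly (the `e_j` part repeats the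
replaced row `i`), then swap rows `i` and `j`.
-/

open Matrix Finset

namespace Matrix

variable {R : Type*} [CommRing R]

theorem det_updateRow_updateRow_swap {n : Type*} [Fintype n] [DecidableEq n] (M : Matrix n n R)
    {i j : n} (hij : i ≠ j) (x y : n → R) :
    ((M.updateRow i x).updateRow j y).det = -((M.updateRow i y).updateRow j x).det := by
  have hswap : (M.updateRow i y).updateRow j x =
      ((M.updateRow i x).updateRow j y).submatrix (Equiv.swap i j) id := by
    ext k l
    rcases eq_or_ne k i with rfl | hki
    · simp [updateRow_apply, hij]
    rcases eq_or_ne k j with rfl | hkj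
    · simp [updateRow_apply, hij]
    · simp [updateRow_apply, Equiv.swap_apply_of_ne_of_ne hki hkj, hki, hkj]
  rw [hswap, det_permute, Equiv.Perm.sign_swap hij]
  simp

variable {m : ℕ}

def arrowhead (b c r : Fin m → R) (s : R) : Matrix (Fin (m + 1)) (Fin (m + 1)) R :=
  of (Fin.snoc (fun k => Fin.snoc (diagonal b k) (c k)) (Fin.snoc r s))

variable {b c r : Fin m → R} {s : R}

@[simp]
theorem arrowhead_castSucc_castSucc (k l : Fin m) :
    arrowhead b c r s k.castSucc l.castSucc = diagonal b k l := by
  simp [arrowhead]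

@[simp]
theorem arrowhead_castSucc_last (k : Fin m) : arrowhead b c r s k.castSucc (Fin.last m) = c k := by
  simp [arrowhead]

@[simp]
theorem arrowhead_last_castSucc (l : Fin m) : arrowhead b c r s (Fin.last m) l.castSucc = r l := by
  simp [arrowhead]

@[simp]
theorem arrowhead_last_last : arrowhead b c r s (Fin.last m) (Fin.last m) = s := by
  simp [arrowhead]

theorem arrowhead_row_castSucc (k : Fin m) :
    arrowhead b c r s k.castSucc =
      b k • Pi.single k.castSucc 1 + c k • Pi.single (Fin.last m) 1 := by
  ext j
  induction j using Fin.lastCases with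
  | last => simp [Fin.castSucc_ne_last]
  | cast l => simp [diagonal_apply, Pi.single_apply, eq_comm]

theorem updateRow_arrowhead_single_last (k : Fin m) :
    (arrowhead b c r s).updateRow k.castSucc (Pi.single (Fin.last m) 1) =
      arrowhead (Function.update b k 0) (Function.update c k 1) r s := by
  ext i j
  induction i using Fin.lastCases with
  | last =>
    rw [updateRow_ne (Fin.castSucc_ne_last k).symm]
    induction j using Fin.lastCases <;> simp
  | cast i =>
    rcases eq_or_ne i k with rfl | hik
    · induction j using Fin.lastCases <;> simp [diagonal_apply, Fin.castSucc_ne_last]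
    · induction j using Fin.lastCases <;> simp [diagonal_apply, hik]

theorem updateRow_arrowhead_single_castSucc (k : Fin m) :
    (arrowhead b c r s).updateRow k.castSucc (Pi.single k.castSucc 1) =
      arrowhead (Function.update b k 1) (Function.update c k 0) r s := by
  ext i j
  induction i using Fin.lastCases with
  | last =>
    rw [updateRow_ne (Fin.castSucc_ne_last k).symm]
    induction j using Fin.lastCases <;> simp
  | cast i =>
    rcases eq_or_ne i k with rfl | hik
    · induction j using Fin.lastCases <;>
        simp [diagonal_apply, Pi.single_apply, eq_comm, Fin.castSucc_ne_last]
    · induction j using Fin.lastCases <;> simp [diagonal_apply, hik]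

theorem det_updateRow_arrowhead_single_last_last :
    ((arrowhead b c r s).updateRow (Fin.last m) (Pi.single (Fin.last m) 1)).det = ∏ k, b k := by
  have hblock : (arrowhead b c r s).submatrix Fin.castSucc Fin.castSucc = diagonal b := by
    ext k l; simp
  rw [← adjugate_apply, adjugate_fin_succ_eq_det_submatrix, Fin.succAbove_last, hblock,
    det_diagonal, Fin.val_last, (Even.add_self m).neg_one_pow, one_mul]

theorem det_updateRow_arrowhead_single_castSucc {i : Fin (m + 1)} {k : Fin m}
    (hik : i ≠ k.castSucc) :
    ((arrowhead b c r s).updateRow i (Pi.single k.castSucc 1)).det =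
      -c k * ((arrowhead (Function.update b k 1) (Function.update c k 0) r s).updateRow i
        (Pi.single (Fin.last m) 1)).det := by
  generalize hM : (arrowhead b c r s).updateRow i (Pi.single k.castSucc 1) = M
  have hrow : M k.castSucc = b k • Pi.single k.castSucc 1 + c k • Pi.single (Fin.last m) 1 := by
    rw [← hM, updateRow_ne hik.symm, arrowhead_row_castSucc]
  have hrepeat : (M.updateRow k.castSucc (Pi.single k.castSucc 1)).det = 0 := by
    simpa [← hM] using det_updateRow_eq_zero (M := M) hik
  rw [← updateRow_eq_self M k.castSucc, hrow, det_updateRow_add, det_updateRow_smul,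
    det_updateRow_smul, hrepeat, ← hM, det_updateRow_updateRow_swap _ hik, updateRow_comm _ hik,
    updateRow_arrowhead_single_castSucc]
  ring

theorem det_arrowhead :
    (arrowhead b c r s).det = s * ∏ k, b k - ∑ k, c k * r k * ∏ l ∈ univ.erase k, b l := by
  have hcofactor (k : Fin m) :
      ((arrowhead b c r s).updateRow (Fin.last m) (Pi.single k.castSucc 1)).det =
        -c k * ∏ l ∈ univ.erase k, b l := by
    rw [det_updateRow_arrowhead_single_castSucc (Fin.castSucc_ne_last k).symm,
      det_updateRow_arrowhead_single_last_last, prod_update_of_mem (mem_univ k),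
      sdiff_singleton_eq_erase, one_mul]
  rw [det_eq_sum_mul_adjugate_row _ (Fin.last m), Fin.sum_univ_castSucc]
  simp only [adjugate_apply, arrowhead_last_castSucc, arrowhead_last_last, hcofactor,
    det_updateRow_arrowhead_single_last_last]
  rw [sub_eq_neg_add, ← sum_neg_distrib, mul_comm]
  exact congrArg (· + _) (sum_congr rfl fun k _ => by ring)

theorem det_arrowhead_update_zero (k : Fin m) :
    (arrowhead (Function.update b k 0) c r s).det = -(c k * r k * ∏ l ∈ univ.erase k, b l) := by
  have hvanish (j : Fin m) (hjk : j ≠ k) :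
      ∏ l ∈ univ.erase j, Function.update b k 0 l = 0 :=
    prod_eq_zero (mem_erase.2 ⟨hjk.symm, mem_univ k⟩) (Function.update_self ..)
  rw [det_arrowhead, prod_eq_zero (mem_univ k) (Function.update_self ..), mul_zero, zero_sub,
    sum_eq_single k (fun j _ hjk => by rw [hvanish j hjk, mul_zero]) (by simp),
    prod_congr rfl fun l hl => Function.update_of_ne (ne_of_mem_erase hl) _ _]

theorem adjugate_arrowhead_last_castSucc (i : Fin m) :
    adjugate (arrowhead b c r s) (Fin.last m) i.castSucc =
      -(r i * ∏ l ∈ univ.erase i, b l) := by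
  rw [adjugate_apply, updateRow_arrowhead_single_last, det_arrowhead_update_zero,
    Function.update_self, one_mul]

theorem adjugate_arrowhead_castSucc_castSucc_of_ne {i j : Fin m} (hij : i ≠ j) :
    adjugate (arrowhead b c r s) j.castSucc i.castSucc =
      c j * r i * ∏ l ∈ (univ.erase i).erase j, b l := by
  rw [adjugate_apply, det_updateRow_arrowhead_single_castSucc (by simpa using hij),
    updateRow_arrowhead_single_last, det_arrowhead_update_zero, Function.update_self,
    prod_update_of_mem (mem_erase.2 ⟨hij.symm, mem_univ j⟩), sdiff_singleton_eq_erase]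
  ring

theorem adjugate_arrowhead_castSucc_castSucc_self (i : Fin m) :
    adjugate (arrowhead b c r s) i.castSucc i.castSucc =
      s * ∏ l ∈ univ.erase i, b l -
        ∑ k ∈ univ.erase i, c k * r k * ∏ l ∈ (univ.erase k).erase i, b l := by
  rw [adjugate_apply, updateRow_arrowhead_single_castSucc, det_arrowhead,
    prod_update_of_mem (mem_univ i), sdiff_singleton_eq_erase, one_mul,
    ← add_sum_erase _ _ (mem_univ i), Function.update_self, zero_mul, zero_mul, zero_add]
  congr 1
  refine sum_congr rfl fun k hk => ?_
  rw [Function.update_of_ne (ne_of_mem_erase hk),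
    prod_update_of_mem (mem_erase.2 ⟨ne_of_mem_erase hk |>.symm, mem_univ i⟩),
    sdiff_singleton_eq_erase, one_mul]

end Matrix

theorem cofactors_of_bordered_diagonal_matrix_general
    (m : ℕ) (b avec : Fin m → ℝ) (a : ℝ)
    (A : Matrix (Fin (m + 1)) (Fin (m + 1)) ℝ)
    (hdiag : ∀ i j : Fin m, A i.castSucc j.castSucc = if i = j then b i else 0)
    (hcol : ∀ i : Fin m, A i.castSucc (Fin.last m) = avec i)
    (hrow : ∀ j : Fin m, A (Fin.last m) j.castSucc = avec j)
    (hcorner : A (Fin.last m) (Fin.last m) = a)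
    (cof : Matrix (Fin (m + 1)) (Fin (m + 1)) ℝ)
    (hcof : ∀ i j : Fin (m + 1), cof i j =
      (-1 : ℝ) ^ ((i : ℕ) + (j : ℕ)) * (A.submatrix i.succAbove j.succAbove).det) :
    (∀ i : Fin m,
      cof i.castSucc (Fin.last m) = -(avec i) * ∏ ℓ ∈ univ.erase i, b ℓ) ∧
    (∀ i j : Fin m, i ≠ j →
      cof i.castSucc j.castSucc = avec i * avec j * ∏ ℓ ∈ (univ.erase i).erase j, b ℓ) ∧
    (∀ i : Fin m,
      cof i.castSucc i.castSucc = a * ∏ ℓ ∈ univ.erase i, b ℓ -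
        ∑ k ∈ univ.erase i, (avec k) ^ 2 * ∏ ℓ ∈ (univ.erase k).erase i, b ℓ) ∧
    A.det = a * ∏ ℓ, b ℓ - ∑ k, (avec k) ^ 2 * ∏ ℓ ∈ univ.erase k, b ℓ := by
  have hA : A = arrowhead b avec avec a := by
    ext i j
    induction i using Fin.lastCases <;> induction j using Fin.lastCases <;>
      simp [hdiag, hcol, hrow, hcorner, diagonal_apply]
  have hcof_adjugate (i j : Fin (m + 1)) : cof i j = adjugate A j i := by
    rw [hcof, adjugate_fin_succ_eq_det_submatrix]
  simp only [hcof_adjugate, hA, sq]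
  refine ⟨fun i => ?_, fun i j hij => ?_, fun i => ?_, ?_⟩
  · rw [adjugate_arrowhead_last_castSucc, neg_mul]
  · rw [adjugate_arrowhead_castSucc_castSucc_of_ne hij, mul_comm (avec j)]
  · exact adjugate_arrowhead_castSucc_castSucc_self i
  · exact det_arrowhead

/-- Cofactors and determinant of an `n × n` symmetric matrix (`n = m + 1 ≥ 2`)
whose leading `(n−1) × (n−1)` principal submatrix is diagonal with entries `b₁, …, b_{n−1}`,
whose last column/row has entries `a₁, …, a_{n−1}` and whose corner entry is `a`. -/
theorem cofactors_of_bordered_diagonal_matrix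
    (m : ℕ) (hm : 1 ≤ m) (b avec : Fin m → ℝ) (a : ℝ)
    (A : Matrix (Fin (m + 1)) (Fin (m + 1)) ℝ)
    (hdiag : ∀ i j : Fin m, A i.castSucc j.castSucc = if i = j then b i else 0)
    (hcol : ∀ i : Fin m, A i.castSucc (Fin.last m) = avec i)
    (hrow : ∀ j : Fin m, A (Fin.last m) j.castSucc = avec j)
    (hcorner : A (Fin.last m) (Fin.last m) = a)
    (cof : Matrix (Fin (m + 1)) (Fin (m + 1)) ℝ)
    (hcof : ∀ i j : Fin (m + 1), cof i j =
      (-1 : ℝ) ^ ((i : ℕ) + (j : ℕ)) * (A.submatrix i.succAbove j.succAbove).det) :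
    (∀ i : Fin m,
      cof i.castSucc (Fin.last m) = -(avec i) * ∏ ℓ ∈ univ.erase i, b ℓ) ∧
    (∀ i j : Fin m, i ≠ j →
      cof i.castSucc j.castSucc = avec i * avec j * ∏ ℓ ∈ (univ.erase i).erase j, b ℓ) ∧
    (∀ i : Fin m,
      cof i.castSucc i.castSucc = a * ∏ ℓ ∈ univ.erase i, b ℓ -
        ∑ k ∈ univ.erase i, (avec k) ^ 2 * ∏ ℓ ∈ (univ.erase k).erase i, b ℓ) ∧
    A.det = a * ∏ ℓ, b ℓ - ∑ k, (avec k) ^ 2 * ∏ ℓ ∈ univ.erase k, b ℓ :=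
  cofactors_of_bordered_diagonal_matrix_general m b avec a A hdiag hcol hrow hcorner cof hcof
end

section
/- Let U ⊆ ℝⁿ be open and let u : U → ℝ be three times continuously differentiable. Then every column of the cofactor matrix of the Hessian of u is divergence-free on U: for each fixed j, Σ_{i=1}^{n} ∂_i (T^u)_{ij} = 0 at every point of U, where (T^u)_{ij} denotes the (i,j)-entry of the cofactor matrix of the Hessian matrix (∂_i ∂_j u). (This is the flat-space case of the identity expressing div(T^u) as a contraction of the Riemann curvature tensor.) -/
/-!
By the adjugate formula, `(T^u)ᵢⱼ` is the determinant of the Hessian with row `i` replaced by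
the constant row `eⱼ`. Differentiating this determinant row by row, `∂ᵢ (T^u)ᵢⱼ` is the sum over
`k ≠ i` of the determinants in which, in addition, row `k` is replaced by `∂ᵢ∂ₖ∇u`. Since third
derivatives commute, the `(i, k)` and `(k, i)` terms are one determinant with two rows exchanged,
so they cancel in the sum over `i`.
-/

/-- Partial derivative `∂ᵢ f` of a real-valued function on `ℝⁿ`. -/
noncomputable def partialDeriv' {n : ℕ} (i : Fin n)
    (f : EuclideanSpace ℝ (Fin n) → ℝ) (x : EuclideanSpace ℝ (Fin n)) : ℝ :=
  fderiv ℝ f x (EuclideanSpace.single i 1)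

/-- Hessian matrix `(∂ᵢ∂ⱼ u)` of a real-valued function on `ℝⁿ`. -/
noncomputable def hessianMatrix {n : ℕ} (u : EuclideanSpace ℝ (Fin n) → ℝ)
    (x : EuclideanSpace ℝ (Fin n)) : Matrix (Fin n) (Fin n) ℝ :=
  Matrix.of fun i j => partialDeriv' i (partialDeriv' j u) x

/-- The Hessian cofactor matrix `T^u`: the `(i,j)` entry is `(−1)^{i+j}` times the minor of
the Hessian matrix obtained by deleting row `i` and column `j`. -/
noncomputable def hessianCofactor {m : ℕ} (u : EuclideanSpace ℝ (Fin (m + 1)) → ℝ)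
    (x : EuclideanSpace ℝ (Fin (m + 1))) : Matrix (Fin (m + 1)) (Fin (m + 1)) ℝ :=
  Matrix.of fun i j => (-1 : ℝ) ^ ((i : ℕ) + (j : ℕ)) *
    ((hessianMatrix u x).submatrix i.succAbove j.succAbove).det

open Matrix

section DetDeriv

variable {𝕜 : Type*} [NontriviallyNormedField 𝕜] {n : Type*} [Fintype n] [DecidableEq n]
  {E : Type*} [NormedAddCommGroup E] [NormedSpace 𝕜 E]

variable (𝕜 n) in
noncomputable def detRowContinuousMultilinear :
    ContinuousMultilinearMap 𝕜 (fun _ : n => n → 𝕜) 𝕜 :=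
  { detRowAlternating with cont := continuous_id.matrix_det }

theorem fderiv_det_apply {A : E → Matrix n n 𝕜} {x : E}
    (hA : ∀ k l, DifferentiableAt 𝕜 (fun y => A y k l) x) (v : E) :
    fderiv 𝕜 (fun y => (A y).det) x v =
      ∑ k, ((A x).updateRow k fun l => fderiv 𝕜 (fun y => A y k l) x v).det := by
  have hrow : ∀ k, HasFDerivAt (fun y => A y k)
      (ContinuousLinearMap.pi fun l => fderiv 𝕜 (fun y => A y k l) x) x := fun k =>
    hasFDerivAt_pi.2 fun l => (hA k l).hasFDerivAt
  have hdet : HasFDerivAt (fun y => (A y).det) _ x :=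
    HasFDerivAt.multilinear_comp (f := detRowContinuousMultilinear 𝕜 n) hrow
  rw [hdet.fderiv, _root_.sum_apply]
  rfl

end DetDeriv

theorem det_updateRow_updateRow_comm {R : Type*} [CommRing R] {n : Type*} [Fintype n]
    [DecidableEq n] (A : Matrix n n R) {i k : n} (hik : i ≠ k) (a b : n → R) :
    ((A.updateRow k a).updateRow i b).det = -((A.updateRow i a).updateRow k b).det := by
  have hswap : (A.updateRow k a).updateRow i b =
      ((A.updateRow i a).updateRow k b).submatrix (Equiv.swap i k) id := by
    ext r l
    rcases eq_or_ne r i with rfl | hri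
    · simp
    rcases eq_or_ne r k with rfl | hrk
    · simp [hik, hri]
    · simp [Equiv.swap_apply_of_ne_of_ne hri hrk, hri, hrk]
  rw [hswap, det_permute, Equiv.Perm.sign_swap hik]
  simp

theorem sum_sum_det_updateRow_updateRow_eq_zero {R : Type*} [CommRing R] {n : Type*} [Fintype n]
    [DecidableEq n] (A : Matrix n n R) (c : n → R) (B : n → Matrix n n R)
    (hB : ∀ i k, B i k = B k i) (hB_diag : ∀ i, B i i = 0) :
    ∑ i, ∑ k, ((A.updateRow i c).updateRow k (B i k)).det = 0 := by
  have hdiag : ∀ i, ((A.updateRow i c).updateRow i (B i i)).det = 0 := fun i =>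
    det_eq_zero_of_row_eq_zero i fun l => by simp [hB_diag]
  rw [← Finset.sum_product']
  refine Finset.sum_ninvolution Prod.swap (fun ⟨i, k⟩ => ?_) (fun ⟨i, k⟩ h => ?_)
    (fun _ => Finset.mem_univ _) Prod.swap_swap
  · rcases eq_or_ne i k with rfl | hik
    · rw [Prod.swap_prod_mk, hdiag, add_zero]
    · simp [hB k i, det_updateRow_updateRow_comm A hik]
  · rintro heq
    obtain rfl : k = i := congrArg Prod.fst heq
    exact h (hdiag k)

theorem ContDiffAt.partialDeriv' {n : ℕ} {f : EuclideanSpace ℝ (Fin n) → ℝ}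
    {x : EuclideanSpace ℝ (Fin n)} {k : WithTop ℕ∞} (hf : ContDiffAt ℝ (k + 1) f x)
    (i : Fin n) : ContDiffAt ℝ k (partialDeriv' i f) x :=
  (hf.fderiv_right le_rfl).clm_apply contDiffAt_const

theorem partialDeriv'_comm {n : ℕ} {f : EuclideanSpace ℝ (Fin n) → ℝ}
    {x : EuclideanSpace ℝ (Fin n)} (hf : ContDiffAt ℝ 2 f x) (i k : Fin n) :
    partialDeriv' i (partialDeriv' k f) x = partialDeriv' k (partialDeriv' i f) x := by
  have hdiff : DifferentiableAt ℝ (fderiv ℝ f) x :=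
    (hf.fderiv_right (m := 1) (by norm_num)).differentiableAt one_ne_zero
  have hsecond : ∀ a b, partialDeriv' a (partialDeriv' b f) x =
      fderiv ℝ (fderiv ℝ f) x (EuclideanSpace.single a 1) (EuclideanSpace.single b 1) := by
    intro a b
    rw [partialDeriv', show partialDeriv' b f = fun y => fderiv ℝ f y _ from rfl,
      fderiv_clm_apply hdiff (differentiableAt_const _)]
    simp
  rw [hsecond, hsecond]
  exact (hf.isSymmSndFDerivAt (by simp)).eq _ _

theorem hessianCofactor_eq_transpose_adjugate {m : ℕ}
    (u : EuclideanSpace ℝ (Fin (m + 1)) → ℝ) (x : EuclideanSpace ℝ (Fin (m + 1))) :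
    hessianCofactor u x = (adjugate (hessianMatrix u x))ᵀ := by
  ext i j
  rw [transpose_apply, adjugate_fin_succ_eq_det_submatrix]
  rfl

theorem partialDeriv'_hessianCofactor {m : ℕ} {u : EuclideanSpace ℝ (Fin (m + 1)) → ℝ}
    {x : EuclideanSpace ℝ (Fin (m + 1))} (hu : ContDiffAt ℝ 3 u x) (i j : Fin (m + 1)) :
    partialDeriv' i (fun y => hessianCofactor u y i j) x =
      ∑ k, (((hessianMatrix u x).updateRow i (Pi.single j 1)).updateRow k
        ((of fun p q => partialDeriv' i (partialDeriv' p (partialDeriv' q u)) x).updateRow i 0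
          k)).det := by
  have hentry : ∀ k l, DifferentiableAt ℝ (fun y => hessianMatrix u y k l) x := fun k l =>
    ((hu.partialDeriv' (k := 2) l).partialDeriv' (k := 1) k).differentiableAt one_ne_zero
  simp_rw [hessianCofactor_eq_transpose_adjugate, transpose_apply, adjugate_apply]
  rw [partialDeriv', fderiv_det_apply]
  · refine Finset.sum_congr rfl fun k _ => ?_
    congr 2
    ext l
    rcases eq_or_ne k i with rfl | hki
    · simp
    · simp only [updateRow_ne hki, of_apply]
      rfl
  · intro k l
    rcases eq_or_ne k i with rfl | hki
    · simp
    · simpa [updateRow_ne hki] using hentry k l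

/-- If `u` is three times continuously differentiable on an open set
`U ⊆ ℝⁿ`, then every column of the cofactor matrix of the Hessian of `u` is divergence-free
on `U`: for each `j`, `Σᵢ ∂ᵢ (T^u)_{ij} = 0` on `U`. -/
theorem hessian_cofactor_divergence_free
    (m : ℕ) (U : Set (EuclideanSpace ℝ (Fin (m + 1)))) (hU : IsOpen U)
    (u : EuclideanSpace ℝ (Fin (m + 1)) → ℝ) (hu : ContDiffOn ℝ 3 u U) :
    ∀ j : Fin (m + 1), ∀ x ∈ U,
      ∑ i : Fin (m + 1), partialDeriv' i (fun y => hessianCofactor u y i j) x = 0 := by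
  intro j x hx
  have hux : ContDiffAt ℝ 3 u x := hu.contDiffAt (hU.mem_nhds hx)
  simp_rw [partialDeriv'_hessianCofactor hux]
  refine sum_sum_det_updateRow_updateRow_eq_zero _ _ _ (fun i k => ?_) fun i => updateRow_self
  rcases eq_or_ne i k with rfl | hik
  · rfl
  ext l
  simp only [updateRow_ne hik, updateRow_ne hik.symm, of_apply]
  exact partialDeriv'_comm (hux.partialDeriv' (k := 2) l) i k
end

section
/- Let U ⊆ ℝⁿ be open, let u : U → ℝ be twice continuously differentiable, and let p ∈ U be a point at which u is three times differentiable, ∇u(p) ≠ 0, and the Hessian ∇²u(p) is nondegenerate. Then the divergence at p of the vector field x ↦ T^u(x)(∇u(x)/‖∇u(x)‖ⁿ) equals ⟨div(T^u)(p), ∇u(p)/‖∇u(p)‖ⁿ⟩, where T^u is the cofactor matrix of the Hessian of u and div(T^u) is the vector field whose j-th component is Σ_i ∂_i (T^u)_{ij}. In particular, since div(T^u) = 0 in ℝⁿ, the vector field T^u(∇u/‖∇u‖ⁿ) is divergence-free at such points. -/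
/-!
Write the field as `(T^u ∇u) / ‖∇u‖ⁿ`. The product rule splits its divergence into
`⟨div T^u, ∇u⟩ / ‖∇u‖ⁿ`, the term `∑ᵢⱼ T^u_ij ∂ᵢ∂ⱼu / ‖∇u‖ⁿ`, and the term
`-n ⟨T^u ∇u, ∇²u ∇u⟩ / ‖∇u‖ⁿ⁺²` coming from the normalisation. Since `T^u` is the transposed
adjugate of `∇²u` and `adj A * A = det A • 1`, these last two terms are `n det ∇²u / ‖∇u‖ⁿ` and
its negative. For the Piola identity `div T^u = 0`, differentiate the Leibniz expansion of the
adjugate: the third derivatives of `u` that appear cancel in pairs under `σ ↦ σ * swap i l`, by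
the symmetry of the second derivative of `∂ₗu`.
-/

open Finset Equiv

theorem Equiv.Perm.sum_eq_zero_of_mul_swap_eq_neg {α R : Type*} [Fintype α] [DecidableEq α]
    [AddCommGroup R] {a b : α} (hab : a ≠ b) {F : Perm α → R}
    (hF : ∀ σ, F (σ * swap a b) = -F σ) : ∑ σ, F σ = 0 :=
  Finset.sum_ninvolution (· * swap a b) (fun σ => by rw [hF, add_neg_cancel])
    (fun σ _ h => hab (σ.injective (by simpa using congrArg (· a) h)).symm)
    (fun _ => Finset.mem_univ _) (fun σ => by simp [mul_assoc])

theorem Matrix.adjugate_apply_eq_sum_perm {ι R : Type*} [Fintype ι] [DecidableEq ι] [CommRing R]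
    (A : Matrix ι ι R) (i j : ι) :
    A.adjugate i j = ∑ σ : Perm ι,
      Perm.sign σ * ((if σ i = j then 1 else 0) * ∏ k ∈ univ.erase i, A (σ k) k) := by
  rw [← transpose_apply A.adjugate, adjugate_transpose, adjugate_apply, updateRow_transpose,
    det_transpose, det_apply']
  refine Finset.sum_congr rfl fun σ _ => ?_
  rw [← Finset.mul_prod_erase _ _ (Finset.mem_univ i), updateCol_self, Pi.single_apply]
  congr 2
  exact Finset.prod_congr rfl fun k hk => updateCol_ne (Finset.ne_of_mem_erase hk)

theorem Matrix.sum_sign_mul_prod_erase_mul_eq_zero {ι R : Type*} [Fintype ι] [DecidableEq ι]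
    [CommRing R] (M : Matrix ι ι R) {D : ι → ι → R} (hD : ∀ a b, D a b = D b a) {i l : ι}
    (hil : i ≠ l) :
    ∑ σ : Perm ι, Perm.sign σ * ((∏ k ∈ (univ.erase i).erase l, M (σ k) k) * D (σ i) (σ l)) =
      0 := by
  refine Perm.sum_eq_zero_of_mul_swap_eq_neg hil fun σ => ?_
  have hprod : ∏ k ∈ (univ.erase i).erase l, M ((σ * Equiv.swap i l) k) k =
      ∏ k ∈ (univ.erase i).erase l, M (σ k) k :=
    Finset.prod_congr rfl fun k hk => by
      rw [Perm.mul_apply, swap_apply_of_ne_of_ne (Finset.ne_of_mem_erase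
        (Finset.mem_of_mem_erase hk)) (Finset.ne_of_mem_erase hk)]
  rw [hprod, Perm.mul_apply, swap_apply_left, Perm.mul_apply, swap_apply_right, hD,
    Perm.sign_mul, Perm.sign_swap hil]
  push_cast
  ring

theorem Matrix.sum_sum_adjugate_mul_eq_card_mul_det {ι R : Type*} [Fintype ι] [DecidableEq ι]
    [CommRing R] (A : Matrix ι ι R) :
    ∑ i, ∑ j, A.adjugate j i * A i j = Fintype.card ι * A.det := by
  rw [Finset.sum_comm]
  simpa [Matrix.trace, Matrix.mul_apply] using congrArg Matrix.trace A.adjugate_mul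

open Matrix in
theorem Matrix.sum_vecMul_adjugate_mul_mulVec {ι R : Type*} [Fintype ι] [DecidableEq ι]
    [CommRing R] (A : Matrix ι ι R) (v : ι → R) :
    ∑ i, (∑ j, A.adjugate j i * v j) * ∑ k, v k * A i k = A.det * ∑ k, v k * v k := by
  have h : v ᵥ* A.adjugate ⬝ᵥ A *ᵥ v = A.det * (v ⬝ᵥ v) := by
    rw [← dotProduct_mulVec, mulVec_mulVec, adjugate_mul, smul_mulVec, one_mulVec,
      dotProduct_smul, smul_eq_mul]
  simpa only [dotProduct, vecMul, mulVec, mul_comm] using h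

theorem differentiableAt_adjugate_apply {𝕜 E ι : Type*} [NontriviallyNormedField 𝕜]
    [NormedAddCommGroup E] [NormedSpace 𝕜 E] [Fintype ι] [DecidableEq ι]
    {A : E → Matrix ι ι 𝕜} {p : E} (hA : ∀ a b, DifferentiableAt 𝕜 (fun y => A y a b) p)
    (i j : ι) : DifferentiableAt 𝕜 (fun y => (A y).adjugate i j) p := by
  simp_rw [Matrix.adjugate_apply_eq_sum_perm]
  fun_prop

section PartialDeriv

variable {n : ℕ} {f g : EuclideanSpace ℝ (Fin n) → ℝ} {x : EuclideanSpace ℝ (Fin n)}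

theorem HasFDerivAt.partialDeriv'_eq {f' : EuclideanSpace ℝ (Fin n) →L[ℝ] ℝ}
    (h : HasFDerivAt f f' x) (i : Fin n) :
    partialDeriv' i f x = f' (EuclideanSpace.single i 1) := by
  rw [partialDeriv', h.fderiv]

theorem partialDeriv'_mul (hf : DifferentiableAt ℝ f x) (hg : DifferentiableAt ℝ g x)
    (i : Fin n) :
    partialDeriv' i (fun y => f y * g y) x =
      partialDeriv' i f x * g x + f x * partialDeriv' i g x := by
  simp only [partialDeriv', fderiv_fun_mul hf hg, add_apply, smul_apply, smul_eq_mul]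
  ring

theorem partialDeriv'_const_mul (hf : DifferentiableAt ℝ f x) (c : ℝ) (i : Fin n) :
    partialDeriv' i (fun y => c * f y) x = c * partialDeriv' i f x :=
  (hf.hasFDerivAt.const_mul c).partialDeriv'_eq i

theorem partialDeriv'_sum {ι : Type*} {s : Finset ι} {F : ι → EuclideanSpace ℝ (Fin n) → ℝ}
    (hF : ∀ k ∈ s, DifferentiableAt ℝ (F k) x) (i : Fin n) :
    partialDeriv' i (fun y => ∑ k ∈ s, F k y) x = ∑ k ∈ s, partialDeriv' i (F k) x := by
  rw [(HasFDerivAt.fun_sum fun k hk => (hF k hk).hasFDerivAt).partialDeriv'_eq,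
    _root_.sum_apply]
  rfl

theorem partialDeriv'_prod {ι : Type*} [DecidableEq ι] {s : Finset ι}
    {F : ι → EuclideanSpace ℝ (Fin n) → ℝ}
    (hF : ∀ k ∈ s, DifferentiableAt ℝ (F k) x) (i : Fin n) :
    partialDeriv' i (fun y => ∏ k ∈ s, F k y) x =
      ∑ l ∈ s, (∏ k ∈ s.erase l, F k x) * partialDeriv' i (F l) x := by
  rw [(HasFDerivAt.finsetProd fun k hk => (hF k hk).hasFDerivAt).partialDeriv'_eq,
    _root_.sum_apply]
  rfl

theorem partialDeriv'_comp {φ : ℝ → ℝ} {φ' : ℝ} (hφ : HasDerivAt φ φ' (f x))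
    (hf : DifferentiableAt ℝ f x) (i : Fin n) :
    partialDeriv' i (fun y => φ (f y)) x = φ' * partialDeriv' i f x :=
  (hφ.comp_hasFDerivAt x hf.hasFDerivAt).partialDeriv'_eq i

theorem partialDeriv'_norm {ι : Type*} [Fintype ι]
    {G : EuclideanSpace ℝ (Fin n) → EuclideanSpace ℝ ι}
    (hG : DifferentiableAt ℝ G x) (h0 : G x ≠ 0) (i : Fin n) :
    partialDeriv' i (fun y => ‖G y‖) x =
      (∑ k, G x k * partialDeriv' i (fun y => G y k) x) / ‖G x‖ := by
  have hGk := differentiableAt_euclidean.1 hG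
  have hsq : partialDeriv' i (fun y => ‖G y‖ ^ 2) x =
      2 * ‖G x‖ * partialDeriv' i (fun y => ‖G y‖) x := by
    rw [partialDeriv'_comp (hasDerivAt_pow 2 _) (hG.norm ℝ h0)]
    ring
  have hsum : partialDeriv' i (fun y => ‖G y‖ ^ 2) x =
      2 * ∑ k, G x k * partialDeriv' i (fun y => G y k) x := by
    have hnormsq : (fun y => ‖G y‖ ^ 2) = fun y => ∑ k, G y k * G y k := by
      funext y
      rw [EuclideanSpace.real_norm_sq_eq]
      simp only [sq]
    rw [hnormsq, partialDeriv'_sum (F := fun k y => G y k * G y k)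
      (fun k _ => (hGk k).mul (hGk k)), Finset.mul_sum]
    exact Finset.sum_congr rfl fun k _ => by rw [partialDeriv'_mul (hGk k) (hGk k)]; ring
  have hpos : ‖G x‖ ≠ 0 := norm_ne_zero_iff.2 h0
  field_simp
  linarith

end PartialDeriv

theorem gradient_apply_eq_partialDeriv' {n : ℕ} (u : EuclideanSpace ℝ (Fin n) → ℝ)
    (y : EuclideanSpace ℝ (Fin n)) (j : Fin n) :
    gradient u y j = partialDeriv' j u y := by
  have h := EuclideanSpace.inner_single_right j (1 : ℝ) (gradient u y)
  rw [gradient, InnerProductSpace.toDual_symm_apply] at h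
  simpa [partialDeriv', gradient] using h.symm

theorem partialDeriv'_comm_s7 {n : ℕ} {f : EuclideanSpace ℝ (Fin n) → ℝ}
    {p : EuclideanSpace ℝ (Fin n)} (hf : ∀ᶠ y in nhds p, DifferentiableAt ℝ f y)
    (hf' : ∀ b, DifferentiableAt ℝ (partialDeriv' b f) p) (a b : Fin n) :
    partialDeriv' a (partialDeriv' b f) p = partialDeriv' b (partialDeriv' a f) p := by
  have hgrad : DifferentiableAt ℝ (gradient f) p :=
    differentiableAt_euclidean.2 fun b => by
      simpa only [gradient_apply_eq_partialDeriv'] using hf' b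
  have hD : DifferentiableAt ℝ (fderiv ℝ f) p := by
    have hfd : fderiv ℝ f = fun y => InnerProductSpace.toDual ℝ _ (gradient f y) :=
      funext fun y => by simp [gradient]
    rw [hfd]
    exact (InnerProductSpace.toDual ℝ _).toContinuousLinearEquiv.differentiableAt.comp p hgrad
  have hsecond : ∀ c d, partialDeriv' c (partialDeriv' d f) p =
      fderiv ℝ (fderiv ℝ f) p (EuclideanSpace.single c 1) (EuclideanSpace.single d 1) := by
    intro c d
    rw [partialDeriv', show partialDeriv' d f = fun y => fderiv ℝ f y (EuclideanSpace.single d 1)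
      from rfl, fderiv_clm_apply hD (differentiableAt_const _)]
    simp
  rw [hsecond, hsecond]
  exact second_derivative_symmetric_of_eventually (hf.mono fun y hy => hy.hasFDerivAt)
    hD.hasFDerivAt _ _

theorem ContDiffOn.differentiableAt_partialDeriv' {n : ℕ} {U : Set (EuclideanSpace ℝ (Fin n))}
    {u : EuclideanSpace ℝ (Fin n) → ℝ} (hu : ContDiffOn ℝ 2 u U) (hU : IsOpen U)
    {y : EuclideanSpace ℝ (Fin n)} (hy : y ∈ U) (l : Fin n) :
    DifferentiableAt ℝ (partialDeriv' l u) y :=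
  (((hu.fderiv_of_isOpen hU (by norm_num)).differentiableOn one_ne_zero).differentiableAt
    (hU.mem_nhds hy)).clm_apply (differentiableAt_const _)

theorem sum_partialDeriv'_adjugate_eq_zero {n : ℕ}
    {A : EuclideanSpace ℝ (Fin n) → Matrix (Fin n) (Fin n) ℝ} {p : EuclideanSpace ℝ (Fin n)}
    (hA : ∀ a b, DifferentiableAt ℝ (fun y => A y a b) p)
    (hcurl : ∀ a b l, partialDeriv' a (fun y => A y b l) p = partialDeriv' b (fun y => A y a l) p)
    (i : Fin n) :
    ∑ j, partialDeriv' j (fun y => (A y).adjugate i j) p = 0 := by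
  set P : Perm (Fin n) → EuclideanSpace ℝ (Fin n) → ℝ :=
    fun σ y => ∏ k ∈ univ.erase i, A y (σ k) k
  have hP : ∀ σ, DifferentiableAt ℝ (P σ) p := fun σ =>
    (HasFDerivAt.finsetProd (g := fun k y => A y (σ k) k) fun k _ =>
      (hA (σ k) k).hasFDerivAt).differentiableAt
  have hadj : ∀ j, partialDeriv' j (fun y => (A y).adjugate i j) p =
      ∑ σ : Perm (Fin n), Perm.sign σ * ((if σ i = j then 1 else 0) * partialDeriv' j (P σ) p) := by
    intro j
    simp_rw [Matrix.adjugate_apply_eq_sum_perm]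
    rw [partialDeriv'_sum fun σ _ => ((hP σ).const_mul _).const_mul _]
    simp_rw [partialDeriv'_const_mul ((hP _).const_mul _), partialDeriv'_const_mul (hP _)]
  calc ∑ j, partialDeriv' j (fun y => (A y).adjugate i j) p
      = ∑ σ : Perm (Fin n), Perm.sign σ * partialDeriv' (σ i) (P σ) p := by
        simp_rw [hadj, ite_mul, one_mul, zero_mul]
        rw [Finset.sum_comm]
        simp_rw [← Finset.mul_sum, Finset.sum_ite_eq, Finset.mem_univ, if_true]
    _ = ∑ l ∈ univ.erase i, ∑ σ : Perm (Fin n), Perm.sign σ *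
          ((∏ k ∈ (univ.erase i).erase l, A p (σ k) k) *
            partialDeriv' (σ i) (fun y => A y (σ l) l) p) := by
        simp_rw [P, partialDeriv'_prod fun k _ => hA _ k, Finset.mul_sum]
        exact Finset.sum_comm
    _ = 0 := Finset.sum_eq_zero fun l hl =>
        (A p).sum_sign_mul_prod_erase_mul_eq_zero (fun a b => hcurl a b l)
          (Finset.ne_of_mem_erase hl).symm

theorem partialDeriv'_div_norm_pow {n : ℕ} {ι : Type*} [Fintype ι]
    {c : EuclideanSpace ℝ (Fin n) → ℝ} {G : EuclideanSpace ℝ (Fin n) → EuclideanSpace ℝ ι}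
    {p : EuclideanSpace ℝ (Fin n)} (hc : DifferentiableAt ℝ c p) (hG : DifferentiableAt ℝ G p)
    (h0 : G p ≠ 0) (N : ℕ) (i : Fin n) :
    partialDeriv' i (fun y => c y / ‖G y‖ ^ N) p =
      partialDeriv' i c p / ‖G p‖ ^ N -
        N * c p * (∑ k, G p k * partialDeriv' i (fun y => G y k) p) / ‖G p‖ ^ (N + 2) := by
  have hr : ‖G p‖ ≠ 0 := norm_ne_zero_iff.2 h0
  have hφ : HasDerivAt (fun t : ℝ => (t ^ N)⁻¹) (-(N * ‖G p‖ ^ (N - 1)) / (‖G p‖ ^ N) ^ 2)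
      ‖G p‖ := (hasDerivAt_pow N _).fun_inv (pow_ne_zero N hr)
  simp_rw [div_eq_mul_inv (c _)]
  rw [partialDeriv'_mul (g := fun y => (‖G y‖ ^ N)⁻¹) hc
      (((hG.norm ℝ h0).pow N).inv (pow_ne_zero N hr)),
    partialDeriv'_comp (φ := fun t => (t ^ N)⁻¹) hφ (hG.norm ℝ h0), partialDeriv'_norm hG h0]
  rcases N with _ | N
  · simp
  · rw [Nat.add_sub_cancel]
    field_simp
    ring

theorem sum_partialDeriv'_mulVec_div_norm_pow {n : ℕ}
    {T : EuclideanSpace ℝ (Fin n) → Matrix (Fin n) (Fin n) ℝ}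
    {G : EuclideanSpace ℝ (Fin n) → EuclideanSpace ℝ (Fin n)} {p : EuclideanSpace ℝ (Fin n)}
    (hT : ∀ i j, DifferentiableAt ℝ (fun y => T y i j) p) (hG : DifferentiableAt ℝ G p)
    (h0 : G p ≠ 0) (N : ℕ) :
    ∑ i, partialDeriv' i (fun y => (∑ j, T y i j * G y j) / ‖G y‖ ^ N) p =
      (∑ j, (∑ i, partialDeriv' i (fun y => T y i j) p) * G p j +
          ∑ i, ∑ j, T p i j * partialDeriv' i (fun y => G y j) p) / ‖G p‖ ^ N -
        N * (∑ i, (∑ j, T p i j * G p j) *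
          ∑ k, G p k * partialDeriv' i (fun y => G y k) p) / ‖G p‖ ^ (N + 2) := by
  have hGj := differentiableAt_euclidean.1 hG
  have hTG : ∀ i j, DifferentiableAt ℝ (fun y => T y i j * G y j) p :=
    fun i j => (hT i j).mul (hGj j)
  simp_rw [partialDeriv'_div_norm_pow (DifferentiableAt.fun_sum fun j _ => hTG _ j) hG h0,
    partialDeriv'_sum fun j _ => hTG _ j, partialDeriv'_mul (hT _ _) (hGj _)]
  rw [Finset.sum_sub_distrib, ← Finset.sum_div, ← Finset.sum_div]
  congr 2
  · simp only [Finset.sum_add_distrib, Finset.sum_mul]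
    rw [Finset.sum_comm (f := fun i j => partialDeriv' i (fun y => T y i j) p * G p j)]
  · rw [Finset.mul_sum]
    simp only [mul_assoc]

section Hessian

variable {m : ℕ} {U : Set (EuclideanSpace ℝ (Fin (m + 1)))}
  {u : EuclideanSpace ℝ (Fin (m + 1)) → ℝ} {p : EuclideanSpace ℝ (Fin (m + 1))}

theorem hessianCofactor_apply_eq_adjugate (y : EuclideanSpace ℝ (Fin (m + 1))) (i j : Fin (m + 1)) :
    hessianCofactor u y i j = (hessianMatrix u y).adjugate j i := by
  rw [Matrix.adjugate_fin_succ_eq_det_submatrix]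
  rfl

theorem partialDeriv'_hessianMatrix_comm (hU : IsOpen U) (hu : ContDiffOn ℝ 2 u U) (hp : p ∈ U)
    (h3 : ∀ i j, DifferentiableAt ℝ (fun y => hessianMatrix u y i j) p) (a b l : Fin (m + 1)) :
    partialDeriv' a (fun y => hessianMatrix u y b l) p =
      partialDeriv' b (fun y => hessianMatrix u y a l) p :=
  partialDeriv'_comm_s7 (Filter.eventually_of_mem (hU.mem_nhds hp) fun _ hy =>
    hu.differentiableAt_partialDeriv' hU hy l) (fun c => h3 c l) a b

theorem sum_partialDeriv'_hessianCofactor_eq_zero (hU : IsOpen U) (hu : ContDiffOn ℝ 2 u U)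
    (hp : p ∈ U) (h3 : ∀ i j, DifferentiableAt ℝ (fun y => hessianMatrix u y i j) p)
    (j : Fin (m + 1)) :
    ∑ i, partialDeriv' i (fun y => hessianCofactor u y i j) p = 0 := by
  simp_rw [hessianCofactor_apply_eq_adjugate]
  exact sum_partialDeriv'_adjugate_eq_zero h3 (partialDeriv'_hessianMatrix_comm hU hu hp h3) j

end Hessian

theorem divergence_of_cofactor_field_general
    (m : ℕ) (U : Set (EuclideanSpace ℝ (Fin (m + 1)))) (hU : IsOpen U)
    (u : EuclideanSpace ℝ (Fin (m + 1)) → ℝ) (hu : ContDiffOn ℝ 2 u U)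
    (p : EuclideanSpace ℝ (Fin (m + 1))) (hp : p ∈ U)
    (h3 : ∀ i j : Fin (m + 1),
      DifferentiableAt ℝ (fun y => hessianMatrix u y i j) p)
    (hgrad : gradient u p ≠ 0) :
    (∑ i : Fin (m + 1), partialDeriv' i (fun y =>
        (∑ j : Fin (m + 1), hessianCofactor u y i j * gradient u y j) /
          ‖gradient u y‖ ^ (m + 1)) p) =
      ∑ j : Fin (m + 1),
        (∑ i : Fin (m + 1), partialDeriv' i (fun y => hessianCofactor u y i j) p) *
          (gradient u p j / ‖gradient u p‖ ^ (m + 1)) ∧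
    (∑ i : Fin (m + 1), partialDeriv' i (fun y =>
        (∑ j : Fin (m + 1), hessianCofactor u y i j * gradient u y j) /
          ‖gradient u y‖ ^ (m + 1)) p) = 0 := by
  have hG : DifferentiableAt ℝ (gradient u) p := differentiableAt_euclidean.2 fun j => by
    simpa only [gradient_apply_eq_partialDeriv'] using hu.differentiableAt_partialDeriv' hU hp j
  have hDG : ∀ i j, partialDeriv' i (fun y => gradient u y j) p = hessianMatrix u p i j := by
    simp [gradient_apply_eq_partialDeriv', hessianMatrix]
  have hT : ∀ i j, DifferentiableAt ℝ (fun y => hessianCofactor u y i j) p := by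
    simpa only [hessianCofactor_apply_eq_adjugate] using
      fun i j => differentiableAt_adjugate_apply h3 j i
  have hnorm : ‖gradient u p‖ ^ 2 = ∑ k, gradient u p k * gradient u p k := by
    rw [EuclideanSpace.real_norm_sq_eq]
    simp only [sq]
  have hr : ‖gradient u p‖ ≠ 0 := norm_ne_zero_iff.2 hgrad
  have hdiv : (∑ i, partialDeriv' i (fun y =>
        (∑ j, hessianCofactor u y i j * gradient u y j) / ‖gradient u y‖ ^ (m + 1)) p) =
      ∑ j, (∑ i, partialDeriv' i (fun y => hessianCofactor u y i j) p) *
        (gradient u p j / ‖gradient u p‖ ^ (m + 1)) := by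
    rw [sum_partialDeriv'_mulVec_div_norm_pow hT hG hgrad]
    simp only [hDG, hessianCofactor_apply_eq_adjugate, Matrix.sum_sum_adjugate_mul_eq_card_mul_det,
      Matrix.sum_vecMul_adjugate_mul_mulVec, ← hnorm, Fintype.card_fin, mul_div_assoc',
      ← Finset.sum_div]
    field_simp
    push_cast
    ring
  refine ⟨hdiv, ?_⟩
  simp [hdiv, sum_partialDeriv'_hessianCofactor_eq_zero hU hu hp h3]

/-- Let `u` be `C²` on an open set `U ⊆ ℝⁿ` (`n = m + 1`) and let `p ∈ U`
be a point at which `u` is three times differentiable, `∇u(p) ≠ 0` and the Hessian is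
nondegenerate.  Then the divergence at `p` of the vector field `T^u(∇u/‖∇u‖ⁿ)` equals
`⟨div(T^u)(p), ∇u(p)/‖∇u(p)‖ⁿ⟩`; in particular, since `div(T^u) = 0` in `ℝⁿ`, this vector
field is divergence-free at such points. -/
theorem divergence_of_cofactor_field
    (m : ℕ) (U : Set (EuclideanSpace ℝ (Fin (m + 1)))) (hU : IsOpen U)
    (u : EuclideanSpace ℝ (Fin (m + 1)) → ℝ) (hu : ContDiffOn ℝ 2 u U)
    (p : EuclideanSpace ℝ (Fin (m + 1))) (hp : p ∈ U)
    (h3 : ∀ i j : Fin (m + 1),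
      DifferentiableAt ℝ (fun y => hessianMatrix u y i j) p)
    (hgrad : gradient u p ≠ 0) (hnd : (hessianMatrix u p).det ≠ 0) :
    (∑ i : Fin (m + 1), partialDeriv' i (fun y =>
        (∑ j : Fin (m + 1), hessianCofactor u y i j * gradient u y j) /
          ‖gradient u y‖ ^ (m + 1)) p) =
      ∑ j : Fin (m + 1),
        (∑ i : Fin (m + 1), partialDeriv' i (fun y => hessianCofactor u y i j) p) *
          (gradient u p j / ‖gradient u p‖ ^ (m + 1)) ∧
    (∑ i : Fin (m + 1), partialDeriv' i (fun y =>
        (∑ j : Fin (m + 1), hessianCofactor u y i j * gradient u y j) /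
          ‖gradient u y‖ ^ (m + 1)) p) = 0 :=
  divergence_of_cofactor_field_general m U hU u hu p hp h3 hgrad
end

section
/- Let H be a real Hilbert space, let u : H → ℝ be convex and continuous, and let t > 0. Then the Moreau envelope ũᵗ(x) := inf_{y ∈ H} ( u(y) + ‖x − y‖²/(2t) ) is a convex function on H and is continuously (Fréchet) differentiable on H. -/
/-!
The envelope is the partial minimum over `y` of the jointly convex function
`u y + ‖x - y‖² / (2t)`, hence convex. For fixed `x` this function is `1/t`-strongly convex,
so by completeness it attains its minimum at some `prox x`, and adding the quadratic growth
inequalities at `prox x` and `prox x'` shows that `prox` is Lipschitz. Using `prox x` as a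
competitor in the infimum defining the envelope at `y` gives
`env y ≤ env x + ⟪(x - prox x) / t, y - x⟫ + ‖y - x‖² / (2t)`, and such a one-sided quadratic
bound with a continuous slope already makes a function C¹.
-/

open Set Filter Topology
open scoped InnerProductSpace

section StrongConvexity

variable {E : Type*} [NormedAddCommGroup E] [InnerProductSpace ℝ E] {f : E → ℝ} {m : ℝ}

theorem StrongConvexOn.bddBelow_range (hf : StrongConvexOn univ m f) (hm : 0 < m)
    (hf_lsc : LowerSemicontinuous f) : BddBelow (range f) := by
  have hg_lsc : LowerSemicontinuous fun x ↦ f x - m / 2 * ‖x‖ ^ 2 :=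
    hf_lsc.add (by fun_prop : Continuous fun x : E ↦ -(m / 2 * ‖x‖ ^ 2)).lowerSemicontinuous
  obtain ⟨l, c, hlc, -⟩ := (strongConvexOn_iff_convex.mp hf).exists_affine_le_of_lt (𝕜 := ℝ)
    (mem_univ 0) (sub_one_lt _) isClosed_univ (hg_lsc.lowerSemicontinuousOn _)
  refine ⟨c - ‖l‖ ^ 2 / (2 * m), forall_mem_range.mpr fun y ↦ ?_⟩
  have hly : l y + c ≤ f y - m / 2 * ‖y‖ ^ 2 := hlc ⟨y, mem_univ y⟩
  have hl : -(‖l‖ * ‖y‖) ≤ l y := neg_le_of_abs_le (l.le_opNorm y)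
  have hsq : 0 ≤ (m * ‖y‖ - ‖l‖) ^ 2 / (2 * m) := by positivity
  have : (m * ‖y‖ - ‖l‖) ^ 2 / (2 * m) = m / 2 * ‖y‖ ^ 2 - ‖l‖ * ‖y‖ + ‖l‖ ^ 2 / (2 * m) := by
    field_simp; ring
  linarith

theorem StrongConvexOn.midpoint_le (hf : StrongConvexOn univ m f) (x y : E) :
    f ((2 : ℝ)⁻¹ • (x + y)) ≤ (f x + f y) / 2 - m / 8 * ‖x - y‖ ^ 2 := by
  have := hf.2 (mem_univ x) (mem_univ y) (by norm_num : (0 : ℝ) ≤ 2⁻¹) (by norm_num : (0 : ℝ) ≤ 2⁻¹)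
    (by norm_num)
  rw [← smul_add] at this
  simp only [smul_eq_mul] at this
  linarith

theorem StrongConvexOn.add_sq_le_of_isMinOn (hf : StrongConvexOn univ m f) {p : E}
    (hp : IsMinOn f univ p) (y : E) : f p + m / 4 * ‖y - p‖ ^ 2 ≤ f y := by
  have hmin : f p ≤ f ((2 : ℝ)⁻¹ • (y + p)) := hp (mem_univ _)
  linarith [hf.midpoint_le y p]

theorem StrongConvexOn.exists_isMinOn [CompleteSpace E] (hf : StrongConvexOn univ m f)
    (hm : 0 < m) (hf_lsc : LowerSemicontinuous f) : ∃ p, IsMinOn f univ p := by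
  have hbdd := hf.bddBelow_range hm hf_lsc
  set μ := ⨅ y, f y
  have hμ : ∀ y, μ ≤ f y := ciInf_le hbdd
  have hε : Tendsto (fun n : ℕ ↦ 1 / ((n : ℝ) + 1)) atTop (𝓝 0) :=
    tendsto_one_div_add_atTop_nhds_zero_nat
  choose y hy using fun n : ℕ ↦
    exists_lt_of_ciInf_lt (lt_add_of_pos_right μ (Nat.one_div_pos_of_nat (α := ℝ) (n := n)))
  -- `m / 8 * ‖y n - y k‖ ^ 2 ≤ (f (y n) + f (y k)) / 2 - μ` by the midpoint inequality
  have hdist : ∀ n k N : ℕ, N ≤ n → N ≤ k → dist (y n) (y k) ≤ √(8 / m * (1 / ((N : ℝ) + 1))) := by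
    intro n k N hn hk
    have hmid := hf.midpoint_le (y n) (y k)
    have hμmid := hμ ((2 : ℝ)⁻¹ • (y n + y k))
    have hnN : 1 / ((n : ℝ) + 1) ≤ 1 / ((N : ℝ) + 1) := by gcongr
    have hkN : 1 / ((k : ℝ) + 1) ≤ 1 / ((N : ℝ) + 1) := by gcongr
    rw [dist_eq_norm, Real.le_sqrt (norm_nonneg _) (by positivity), div_mul_eq_mul_div,
      le_div_iff₀ hm]
    linarith [hy n, hy k]
  have hcauchy : CauchySeq y := cauchySeq_of_le_tendsto_0 _ hdist <| by
    simpa using (hε.const_mul (8 / m)).sqrt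
  obtain ⟨p, hp⟩ := cauchySeq_tendsto_of_complete hcauchy
  refine ⟨p, fun z _ ↦ le_trans ?_ (hμ z)⟩
  by_contra! hlt
  obtain ⟨c, hμc, hcp⟩ := exists_between hlt
  have hlarge : ∀ᶠ n in atTop, c < f (y n) := hp.eventually (hf_lsc p c hcp)
  have hsmall : ∀ᶠ n : ℕ in atTop, μ + 1 / ((n : ℝ) + 1) < c :=
    (hε.const_add μ).eventually (gt_mem_nhds (by simpa using hμc))
  obtain ⟨n, hn₁, hn₂⟩ := (hlarge.and hsmall).exists
  linarith [hy n]

end StrongConvexity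

section PartialMinimization

variable {𝕜 E F β : Type*} [Semiring 𝕜] [PartialOrder 𝕜] [AddCommMonoid E] [AddCommMonoid F]
  [AddCommMonoid β] [PartialOrder β] [SMul 𝕜 E] [SMul 𝕜 F] [SMul 𝕜 β]

theorem ConvexOn.comp_isMinOn {G : E → F → β} (hG : ConvexOn 𝕜 univ fun q : E × F ↦ G q.1 q.2)
    {p : E → F} (hp : ∀ x, IsMinOn (G x) univ (p x)) : ConvexOn 𝕜 univ fun x ↦ G x (p x) := by
  refine ⟨convex_univ, fun x _ y _ a b ha hb hab ↦ ?_⟩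
  calc G (a • x + b • y) (p (a • x + b • y)) ≤ G (a • x + b • y) (a • p x + b • p y) :=
        hp _ (mem_univ _)
    _ ≤ a • G x (p x) + b • G y (p y) :=
        hG.2 (mem_univ (x, p x)) (mem_univ (y, p y)) ha hb hab

end PartialMinimization

section Differentiability

variable {E : Type*} [NormedAddCommGroup E] [InnerProductSpace ℝ E] {f : E → ℝ} {g : E → E} {C : ℝ}

-- Applying the bound at `x` and at `x + h` squeezes the remainder between
-- `⟪g (x + h) - g x, h⟫ - C ‖h‖²` and `C ‖h‖²`.
theorem hasFDerivAt_of_le_add_inner {x : E} (hg : ContinuousAt g x)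
    (hf : ∀ y z, f z ≤ f y + ⟪g y, z - y⟫_ℝ + C * ‖z - y‖ ^ 2) :
    HasFDerivAt f (innerSL ℝ (g x)) x := by
  rw [hasFDerivAt_iff_isLittleO_nhds_zero, Asymptotics.isLittleO_iff]
  intro ε hε
  have hk : Tendsto (fun h ↦ ‖g (x + h) - g x‖ + |C| * ‖h‖) (𝓝 0) (𝓝 0) := by
    have : ContinuousAt (fun h ↦ ‖g (x + h) - g x‖ + |C| * ‖h‖) 0 :=
      ((hg.comp_of_eq (continuous_const_add x).continuousAt (add_zero x)).sub
        continuousAt_const).norm.add (continuousAt_const.mul continuous_norm.continuousAt)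
    simpa using this.tendsto
  filter_upwards [hk.eventually (gt_mem_nhds hε)] with h hh
  have hup := hf x (x + h)
  have hlow := hf (x + h) x
  simp only [add_sub_cancel_left, sub_add_cancel_left, inner_neg_right, norm_neg] at hup hlow
  have hinner := abs_real_inner_le_norm (g (x + h) - g x) h
  have hε' := mul_le_mul_of_nonneg_right hh.le (norm_nonneg h)
  have hC : |C * ‖h‖ ^ 2| ≤ |C| * ‖h‖ * ‖h‖ := by rw [abs_mul, abs_pow, abs_norm, mul_assoc, sq]
  rw [innerSL_apply_apply, Real.norm_eq_abs, abs_le]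
  rw [abs_le, inner_sub_left] at hinner
  rw [abs_le] at hC
  constructor <;> linarith

theorem contDiff_one_of_le_add_inner (hg : Continuous g)
    (hf : ∀ y z, f z ≤ f y + ⟪g y, z - y⟫_ℝ + C * ‖z - y‖ ^ 2) : ContDiff ℝ 1 f := by
  have hderiv x := hasFDerivAt_of_le_add_inner hg.continuousAt hf (x := x)
  rw [contDiff_one_iff_fderiv, funext fun x ↦ (hderiv x).fderiv]
  exact ⟨fun x ↦ (hderiv x).differentiableAt, (innerSL ℝ).continuous.comp hg⟩

end Differentiability

section Moreau

variable {H : Type*} [NormedAddCommGroup H] {u : H → ℝ} {t : ℝ}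

noncomputable def moreauObjective (u : H → ℝ) (t : ℝ) (x y : H) : ℝ := u y + ‖x - y‖ ^ 2 / (2 * t)

theorem continuous_moreauObjective (hu : Continuous u) (t : ℝ) (x : H) :
    Continuous (moreauObjective u t x) := by
  unfold moreauObjective
  fun_prop

variable [InnerProductSpace ℝ H]

theorem moreauObjective_eq_add_inner (x y p : H) :
    moreauObjective u t y p =
      moreauObjective u t x p + ⟪(1 / t) • (x - p), y - x⟫_ℝ + 1 / (2 * t) * ‖y - x‖ ^ 2 := by
  rw [moreauObjective, moreauObjective, show y - p = (x - p) + (y - x) by abel,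
    norm_add_sq_real, real_inner_smul_left]
  ring

theorem strongConvexOn_moreauObjective (hu : ConvexOn ℝ univ u) (x : H) :
    StrongConvexOn univ (1 / t) (moreauObjective u t x) := by
  rw [strongConvexOn_iff_convex]
  have hrw : (fun y ↦ moreauObjective u t x y - 1 / t / 2 * ‖y‖ ^ 2) =
      fun y ↦ u y + (‖x‖ ^ 2 / (2 * t) - (1 / t) * ⟪x, y⟫_ℝ) := by
    ext y
    rw [moreauObjective, norm_sub_sq_real]
    ring
  rw [hrw]
  exact hu.add ((convexOn_const _ convex_univ).sub
    (((1 / t) • innerₛₗ ℝ x).concaveOn convex_univ))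

theorem convexOn_moreauObjective_uncurry (hu : ConvexOn ℝ univ u) (ht : 0 ≤ t) :
    ConvexOn ℝ univ fun q : H × H ↦ moreauObjective u t q.1 q.2 := by
  have hsq : ConvexOn ℝ univ fun q : H × H ↦ ‖q.1 - q.2‖ ^ 2 :=
    (convexOn_univ_norm.pow (fun _ _ ↦ norm_nonneg _) 2).comp_linearMap
      (LinearMap.fst ℝ H H - LinearMap.snd ℝ H H)
  refine ((hu.comp_linearMap (LinearMap.snd ℝ H H)).add
    (hsq.smul (by positivity : 0 ≤ (2 * t)⁻¹))).congr fun q _ ↦ ?_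
  simp [moreauObjective, div_eq_inv_mul]

theorem norm_sub_le_of_isMinOn_moreauObjective (hu : ConvexOn ℝ univ u) (ht : 0 < t)
    {x x' p q : H} (hp : IsMinOn (moreauObjective u t x) univ p)
    (hq : IsMinOn (moreauObjective u t x') univ q) : ‖p - q‖ ≤ 2 * ‖x - x'‖ := by
  have hgp := (strongConvexOn_moreauObjective hu x).add_sq_le_of_isMinOn hp q
  have hgq := (strongConvexOn_moreauObjective hu x').add_sq_le_of_isMinOn hq p
  rw [moreauObjective_eq_add_inner x' x q] at hgp
  rw [moreauObjective_eq_add_inner x x' p] at hgq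
  have hinner : ⟪p - q, x - x'⟫_ℝ = ⟪x' - q, x - x'⟫_ℝ - ⟪x - p, x - x'⟫_ℝ + ‖x - x'‖ ^ 2 := by
    rw [← real_inner_self_eq_norm_sq, ← inner_sub_left, ← inner_add_left]
    congr 1
    abel
  have hkey : ‖p - q‖ ^ 2 ≤ 2 * ⟪p - q, x - x'⟫_ℝ := by
    rw [real_inner_smul_left, norm_sub_rev q p] at hgp
    rw [real_inner_smul_left, ← neg_sub x x', inner_neg_right, norm_neg] at hgq
    have hpos : 0 < 1 / t := by positivity
    have ht2 : 1 / (2 * t) = 1 / t / 2 := by ring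
    have : 1 / t * (‖p - q‖ ^ 2 - 2 * ⟪p - q, x - x'⟫_ℝ) ≤ 0 := by
      rw [ht2] at hgp hgq
      rw [hinner]
      linarith
    linarith [nonpos_of_mul_nonpos_right this hpos]
  have hcs := real_inner_le_norm (p - q) (x - x')
  nlinarith [norm_nonneg (p - q), norm_nonneg (x - x')]

end Moreau

/-- The Moreau envelope of a convex continuous function on a real Hilbert
space is convex and continuously (Fréchet) differentiable. -/
theorem moreau_envelope_convex_and_C1
    {H : Type*} [NormedAddCommGroup H] [InnerProductSpace ℝ H] [CompleteSpace H]
    (u : H → ℝ) (hconv : ConvexOn ℝ Set.univ u) (hcont : Continuous u)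
    (t : ℝ) (ht : 0 < t)
    (env : H → ℝ) (henv : ∀ x : H, env x = ⨅ y : H, (u y + ‖x - y‖ ^ 2 / (2 * t))) :
    ConvexOn ℝ Set.univ env ∧ ContDiff ℝ 1 env := by
  choose prox hprox using fun x ↦ (strongConvexOn_moreauObjective (t := t) hconv x).exists_isMinOn
    (by positivity) (continuous_moreauObjective hcont t x).lowerSemicontinuous
  have henv_eq : env = fun x ↦ moreauObjective u t x (prox x) := funext fun x ↦
    (henv x).trans <| ciInf_eq_of_forall_ge_of_forall_gt_exists_lt
      (fun y ↦ hprox x (mem_univ y)) fun _ hw ↦ ⟨prox x, hw⟩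
  have hprox_cont : Continuous prox := (LipschitzWith.of_dist_le_mul (K := 2) fun x x' ↦ by
    simpa [dist_eq_norm] using norm_sub_le_of_isMinOn_moreauObjective hconv ht (hprox x) (hprox x')
    ).continuous
  subst henv_eq
  refine ⟨(convexOn_moreauObjective_uncurry hconv ht.le).comp_isMinOn hprox,
    contDiff_one_of_le_add_inner (g := fun x ↦ (1 / t) • (x - prox x)) (C := 1 / (2 * t))
      (by fun_prop) fun x y ↦ ?_⟩
  calc moreauObjective u t y (prox y) ≤ moreauObjective u t y (prox x) := hprox y (mem_univ _)
    _ = _ := moreauObjective_eq_add_inner x y (prox x)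
end

section
/- Let Ω ⊆ ℝⁿ (n ≥ 2) be a compact convex set with nonempty interior and let Γ = ∂Ω be its boundary. Let x be a point in the interior of Ω, and let x⁰ be a nearest point of x on cut(Γ), the closure of the medial axis of Γ. Then d_Γ(x⁰) ≥ d_Γ(x), i.e., the distance from x⁰ to Γ is at least the distance from x to Γ. (This is the Euclidean case of the theorem that for a d-convex hypersurface in a Cartan–Hadamard manifold, the footprint of any interior point on the cut locus is at least as far from the hypersurface as the point itself; in ℝⁿ the signed distance function of a convex hypersurface is convex, so every convex hypersurface is d-convex.) -/
/-- The medial axis of a set `X`: points having at least two nearest points on `X`. -/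
def medialAxis {n : ℕ} (X : Set (EuclideanSpace ℝ (Fin n))) : Set (EuclideanSpace ℝ (Fin n)) :=
  {q | ∃ a ∈ X, ∃ b ∈ X, a ≠ b ∧
    ‖q - a‖ = Metric.infDist q X ∧ ‖q - b‖ = Metric.infDist q X}

/-- The cut locus of a set: the closure of its medial axis. -/
def cutLocus {n : ℕ} (X : Set (EuclideanSpace ℝ (Fin n))) : Set (EuclideanSpace ℝ (Fin n)) :=
  closure (medialAxis X)

open Metric Set Filter Topology Asymptotics
open scoped RealInnerProductSpace

/-!
Write `f = d_Γ`. On the convex body `Ω` the function `f` is concave, and at a point off `Γ`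
with a unique nearest point `y₀` it is differentiable with gradient the unit vector from `y₀`.
Hence, for `0 < τ ≤ f c`, the proximal map sending `c` to a minimiser `w` over `Ω` of
`‖y - c‖² - 2τ f(y)` maps medial points to medial points: were the footprint `y₀` of `w`
unique, Fermat's rule would put `c` on the segment `[y₀, w]` at distance `τ` from `w`, and then
every nearest point of `c` would also be one of `w`. Concavity of `f` gives
`‖x - w‖² + 2τ (f x - f w) ≤ ‖x - c‖²`, and comparing `w` with `c` gives `f c ≤ f w ≤ f c + 2τ`.

Start the proximal iteration at a medial point `m`. While `f` stays below `f x - δ`, each step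
lowers `‖x - c‖²` by at least `2τδ` and does not increase `‖x - c‖² + δ f c`. The first quantity
cannot decrease forever, and, no medial point being closer to `x` than `ρ = ‖x - x₀‖`, the second
keeps `f c ≤ f m + (‖x - m‖² - ρ²)/δ`. Hence `f x ≤ f m + (‖x - m‖² - ρ²)/δ + δ + 2τ`; let
`τ → 0`, then `m → x₀` along the medial axis, then `δ → 0`.
-/

theorem IsPreconnected.inter_frontier_nonempty {α : Type*} [TopologicalSpace α] {S s : Set α}
    (hS : IsPreconnected S) (hin : (S ∩ s).Nonempty) (hout : (S \ s).Nonempty) :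
    (S ∩ frontier s).Nonempty := by
  by_contra h
  have hsplit : S ⊆ interior s ∪ interior sᶜ := fun y hy => by
    rw [interior_compl, mem_union, mem_compl_iff]
    by_contra! hc
    exact h ⟨y, hy, hc.2, hc.1⟩
  obtain ⟨y, -, hy⟩ := hS _ _ isOpen_interior isOpen_interior hsplit
    (hin.mono fun y hy => ⟨hy.1, (hsplit hy.1).resolve_right fun hc => interior_subset hc hy.2⟩)
    (hout.mono fun y hy => ⟨hy.1, (hsplit hy.1).resolve_left fun hi => hy.2 (interior_subset hi)⟩)
  exact interior_subset hy.2 (interior_subset hy.1)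

theorem le_infDist_frontier_of_ball_subset {α : Type*} [PseudoMetricSpace α] {s : Set α} {z : α}
    {r : ℝ} (hs : (frontier s).Nonempty) (hball : ball z r ⊆ s) :
    r ≤ infDist z (frontier s) :=
  (le_infDist hs).2 fun _ hc => not_lt.1 fun hcr =>
    hc.2 (interior_maximal hball isOpen_ball (mem_ball'.2 hcr))

theorem tendsto_footprint_of_unique {α : Type*} [PseudoMetricSpace α] {X : Set α}
    (hX : IsCompact X) {w y₀ : α} {Y : α → α}
    (hYX : ∀ y, Y y ∈ X) (hY : ∀ y, dist y (Y y) = infDist y X)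
    (huniq : ∀ y ∈ X, dist w y = infDist w X → y = y₀) : Tendsto Y (𝓝 w) (𝓝 y₀) := by
  refine hX.tendsto_nhds_of_unique_mapClusterPt (.of_forall hYX) fun p hp hcl => huniq p hp ?_
  have hlim : Tendsto (fun y => dist w (Y y)) (𝓝 w) (𝓝 (infDist w X)) := by
    have hup : Tendsto (fun y => infDist w X + 2 * dist y w) (𝓝 w) (𝓝 (infDist w X)) := by
      simpa using tendsto_const_nhds.add
        (((continuous_id.dist continuous_const).tendsto' w 0 (dist_self w)).const_mul 2)
    refine tendsto_of_tendsto_of_tendsto_of_le_of_le tendsto_const_nhds hup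
      (fun y => infDist_le_dist_of_mem (hYX y)) fun y => ?_
    calc dist w (Y y) ≤ dist w y + dist y (Y y) := dist_triangle _ _ _
      _ ≤ dist w y + (infDist w X + dist y w) := by
        rw [hY]; gcongr; exact infDist_le_infDist_add_dist
      _ = infDist w X + 2 * dist y w := by rw [dist_comm w y]; ring
  exact eq_of_nhds_neBot
    ((hcl.continuousAt_comp (continuous_const.dist continuous_id).continuousAt).clusterPt.mono hlim)

section NormedSpace

variable {E : Type*} [NormedAddCommGroup E] [NormedSpace ℝ E]

theorem ball_infDist_frontier_subset {s : Set E} {q : E} (hq : q ∈ s) :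
    ball q (infDist q (frontier s)) ⊆ s := by
  intro y hy
  by_contra hys
  obtain ⟨c, hc, hcs⟩ := (convex_ball q _).isPreconnected.inter_frontier_nonempty
    ⟨q, mem_ball_self (pos_of_mem_ball hy), hq⟩ ⟨y, hy, hys⟩
  exact (infDist_le_dist_of_mem hcs).not_gt (mem_ball'.1 hc)

theorem add_smul_mem_of_norm_lt_one {s : Set E} {q v : E} (hq : q ∈ s) (hv : ‖v‖ < 1) :
    q + infDist q (frontier s) • v ∈ s := by
  rcases (infDist_nonneg (x := q) (s := frontier s)).eq_or_lt with h | h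
  · simpa [← h] using hq
  refine ball_infDist_frontier_subset hq ?_
  rw [mem_ball, dist_eq_norm, add_sub_cancel_left, norm_smul, Real.norm_of_nonneg h.le]
  exact mul_lt_of_lt_one_right h hv

theorem Convex.concaveOn_infDist_frontier {s : Set E} (hs : Convex ℝ s) :
    ConcaveOn ℝ s fun q => infDist q (frontier s) := by
  refine ⟨hs, fun a ha b hb α β hα hβ hαβ => ?_⟩
  rcases (frontier s).eq_empty_or_nonempty with h | h
  · simp [h]
  refine le_infDist_frontier_of_ball_subset h fun y hy => ?_
  set r := α • infDist a (frontier s) + β • infDist b (frontier s)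
  have hr : 0 < r := dist_nonneg.trans_lt (mem_ball.1 hy)
  obtain ⟨v, hv, hrv⟩ : ∃ v : E, ‖v‖ < 1 ∧ y = α • a + β • b + r • v := by
    refine ⟨r⁻¹ • (y - (α • a + β • b)), ?_, by rw [smul_inv_smul₀ hr.ne']; abel⟩
    rw [norm_smul, norm_inv, Real.norm_of_nonneg hr.le, ← dist_eq_norm, inv_mul_lt_one₀ hr]
    exact mem_ball.1 hy
  have hy : y = α • (a + infDist a (frontier s) • v) + β • (b + infDist b (frontier s) • v) := by
    rw [hrv]
    simp only [r, smul_eq_mul]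
    module
  rw [hy]
  exact hs (add_smul_mem_of_norm_lt_one ha hv) (add_smul_mem_of_norm_lt_one hb hv) hα hβ hαβ

end NormedSpace

section InnerProductSpace

variable {E : Type*} [NormedAddCommGroup E] [InnerProductSpace ℝ E]

theorem infDist_add_inner_le {X : Set E} {w y z : E} (hz : z ∈ X)
    (hyz : dist y z = infDist y X) (hwz : w ≠ z) :
    infDist w X + ⟪y - w, (dist w z)⁻¹ • (w - z)⟫ ≤ infDist y X := by
  have hr : 0 < dist w z := dist_pos.2 hwz
  set e := (dist w z)⁻¹ • (w - z)
  have hunit : ‖e‖ = 1 := by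
    rw [norm_smul, norm_inv, Real.norm_of_nonneg hr.le, ← dist_eq_norm, inv_mul_cancel₀ hr.ne']
  have hwz' : ⟪w - z, e⟫ = dist w z := by
    rw [real_inner_smul_right, real_inner_self_eq_norm_sq, ← dist_eq_norm, sq,
      inv_mul_cancel_left₀ hr.ne']
  calc infDist w X + ⟪y - w, e⟫ ≤ ⟪w - z, e⟫ + ⟪y - w, e⟫ := by
        rw [hwz']; gcongr; exact infDist_le_dist_of_mem hz
    _ = ⟪y - z, e⟫ := by rw [← inner_add_left, sub_add_sub_cancel']
    _ ≤ ‖y - z‖ * ‖e‖ := real_inner_le_norm _ _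
    _ = infDist y X := by rw [hunit, mul_one, ← dist_eq_norm, hyz]

theorem norm_add_le_add_inner_add_sq {v : E} (hv : v ≠ 0) (h : E) :
    ‖v + h‖ ≤ ‖v‖ + ⟪h, ‖v‖⁻¹ • v⟫ + ‖h‖ ^ 2 / (2 * ‖v‖) := by
  have hr : 0 < ‖v‖ := norm_pos_iff.2 hv
  rw [real_inner_smul_right, real_inner_comm, ← sub_nonneg]
  have key : 0 ≤ (‖v + h‖ - ‖v‖) ^ 2 := sq_nonneg _
  rw [sub_sq, norm_add_sq_real] at key
  have : ‖v‖ + ‖v‖⁻¹ * ⟪v, h⟫ + ‖h‖ ^ 2 / (2 * ‖v‖) - ‖v + h‖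
      = ((‖v‖ ^ 2 + 2 * ⟪v, h⟫ + ‖h‖ ^ 2) - 2 * ‖v + h‖ * ‖v‖ + ‖v‖ ^ 2) / (2 * ‖v‖) := by
    field_simp
    ring
  rw [this]
  positivity

theorem hasFDerivAt_infDist_of_unique_s19 {X : Set E} (hX : IsCompact X) {w y₀ : E} (hw : w ∉ X)
    (hy₀ : y₀ ∈ X) (hwy₀ : dist w y₀ = infDist w X)
    (huniq : ∀ y ∈ X, dist w y = infDist w X → y = y₀) :
    HasFDerivAt (infDist · X) (innerSL ℝ ((dist w y₀)⁻¹ • (w - y₀))) w := by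
  have hr : 0 < dist w y₀ := dist_pos.2 fun h => hw (h ▸ hy₀)
  choose Y hYX hY using fun y => hX.exists_infDist_eq_dist ⟨y₀, hy₀⟩ y
  have he : Tendsto (fun y => (dist w (Y y))⁻¹ • (w - Y y)) (𝓝 w) (𝓝 ((dist w y₀)⁻¹ • (w - y₀))) :=
    (((continuous_const.dist continuous_id).continuousAt.inv₀ hr.ne').smul
      (continuous_const.sub continuous_id).continuousAt).tendsto.comp
      (tendsto_footprint_of_unique hX hYX (fun y => (hY y).symm) huniq)
  refine HasFDerivAt.of_isLittleO (isLittleO_iff.2 fun ε hε => ?_)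
  filter_upwards [he.eventually (closedBall_mem_nhds _ hε),
    closedBall_mem_nhds w (mul_pos (mul_pos two_pos hr) hε)] with y hey hyw
  rw [dist_eq_norm] at hey
  rw [mem_closedBall, dist_eq_norm] at hyw
  rw [innerSL_apply_apply, Real.norm_eq_abs, abs_le, real_inner_comm]
  constructor
  · have hlow := infDist_add_inner_le (hYX y) (hY y).symm (ne_of_mem_of_not_mem (hYX y) hw).symm
    have hcs : ⟪y - w, (dist w (Y y))⁻¹ • (w - Y y) - (dist w y₀)⁻¹ • (w - y₀)⟫ ≥
        -(ε * ‖y - w‖) := by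
      refine neg_le_of_abs_le ((abs_real_inner_le_norm _ _).trans ?_)
      rw [mul_comm ε]
      exact mul_le_mul_of_nonneg_left hey (norm_nonneg _)
    rw [inner_sub_right] at hcs
    linarith
  · have hup := norm_add_le_add_inner_add_sq (v := w - y₀)
      (sub_ne_zero.2 (ne_of_mem_of_not_mem hy₀ hw).symm) (y - w)
    rw [← dist_eq_norm w y₀, sub_add_sub_cancel', ← dist_eq_norm] at hup
    have hsq : ‖y - w‖ ^ 2 / (2 * dist w y₀) ≤ ε * ‖y - w‖ := by
      rw [div_le_iff₀ (by positivity), sq]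
      nlinarith [norm_nonneg (y - w)]
    have hyy₀ := infDist_le_dist_of_mem hy₀ (x := y)
    rw [← hwy₀]
    linarith

theorem sub_eq_smul_of_isLocalMin_prox {f : E → ℝ} {c w u : E} {τ : ℝ}
    (hf : HasFDerivAt f (innerSL ℝ u) w)
    (hmin : IsLocalMin (fun y => ‖y - c‖ ^ 2 - 2 * τ * f y) w) : w - c = τ • u := by
  have hG := ((hasStrictFDerivAt_norm_sq (w - c)).hasFDerivAt.comp w
    ((hasFDerivAt_id w).sub_const c)).sub (hf.const_mul (2 * τ))
  have h0 := congrArg (· (w - c - τ • u)) (hmin.hasFDerivAt_eq_zero hG)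
  simp only [sub_apply, ContinuousLinearMap.comp_apply, smul_apply, innerSL_apply_apply,
    zero_apply, ContinuousLinearMap.id_apply, smul_eq_mul, nsmul_eq_mul, Nat.cast_ofNat] at h0
  have hv : ⟪w - c - τ • u, w - c - τ • u⟫ = 0 := by
    rw [inner_sub_left, real_inner_smul_left]
    linarith
  exact sub_eq_zero.1 (inner_self_eq_zero.1 hv)

theorem IsMinOn.norm_sub_sq_add_le_of_concaveOn {s : Set E} {f : E → ℝ} (hf : ConcaveOn ℝ s f)
    {c w x : E} {τ : ℝ} (hτ : 0 ≤ τ) (hmin : IsMinOn (fun y => ‖y - c‖ ^ 2 - 2 * τ * f y) s w)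
    (hw : w ∈ s) (hx : x ∈ s) : ‖x - w‖ ^ 2 + 2 * τ * (f x - f w) ≤ ‖x - c‖ ^ 2 := by
  have key : ∀ t ∈ Ioc (0 : ℝ) 1, τ * (f x - f w) ≤ ⟪w - c, x - w⟫ + t * ‖x - w‖ ^ 2 / 2 := by
    rintro t ⟨ht0, ht1⟩
    have hconc := hf.2 hw hx (sub_nonneg.2 ht1) ht0.le (sub_add_cancel 1 t)
    have hm : ‖w - c‖ ^ 2 - 2 * τ * f w ≤
        ‖(1 - t) • w + t • x - c‖ ^ 2 - 2 * τ * f ((1 - t) • w + t • x) :=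
      hmin (hf.1 hw hx (sub_nonneg.2 ht1) ht0.le (sub_add_cancel 1 t))
    have hexp : (1 - t) • w + t • x - c = (w - c) + t • (x - w) := by module
    rw [hexp, norm_add_sq_real, real_inner_smul_right, norm_smul, Real.norm_of_nonneg ht0.le] at hm
    simp only [smul_eq_mul] at hconc
    have : t * (τ * (f x - f w)) ≤ t * (⟪w - c, x - w⟫ + t * ‖x - w‖ ^ 2 / 2) := by
      nlinarith [mul_le_mul_of_nonneg_left hconc hτ]
    exact le_of_mul_le_mul_left this ht0
  have hlim : τ * (f x - f w) ≤ ⟪w - c, x - w⟫ := by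
    refine ge_of_tendsto (tendsto_nhdsWithin_of_tendsto_nhds ?_)
      (mem_of_superset (Ioo_mem_nhdsGT zero_lt_one) fun t ht => key t ⟨ht.1, ht.2.le⟩)
    exact (Continuous.tendsto' (by fun_prop) 0 _ (by simp))
  have hexp : x - c = (x - w) + (w - c) := by abel
  rw [hexp, norm_add_sq_real, real_inner_comm]
  nlinarith [sq_nonneg ‖w - c‖]

end InnerProductSpace

section Euclidean

variable {n : ℕ}

local notation "𝔼" => EuclideanSpace ℝ (Fin n)

theorem infDist_pos_of_mem_medialAxis {X : Set 𝔼} {c : 𝔼} (hc : c ∈ medialAxis X) :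
    0 < infDist c X := by
  obtain ⟨a, -, b, -, hab, hca, hcb⟩ := hc
  refine infDist_nonneg.lt_of_ne fun h => hab ?_
  rw [← h, norm_sub_eq_zero_iff] at hca hcb
  exact hca.symm.trans hcb

theorem mem_medialAxis_of_norm_sub_add_infDist_le {X : Set 𝔼} {c w : 𝔼}
    (hc : c ∈ medialAxis X) (h : ‖w - c‖ + infDist c X ≤ infDist w X) : w ∈ medialAxis X := by
  obtain ⟨a, ha, b, hb, hab, hca, hcb⟩ := hc
  have key : ∀ z ∈ X, ‖c - z‖ = infDist c X → ‖w - z‖ = infDist w X := fun z hz hcz =>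
    le_antisymm ((norm_sub_le_norm_sub_add_norm_sub w c z).trans (hcz ▸ h))
      (by rw [← dist_eq_norm]; exact infDist_le_dist_of_mem hz)
  exact ⟨a, ha, b, hb, hab, key a ha hca, key b hb hcb⟩

theorem Convex.medialAxis_frontier_subset {Ω : Set 𝔼} (hconv : Convex ℝ Ω) (hcl : IsClosed Ω) :
    medialAxis (frontier Ω) ⊆ Ω := by
  intro q hq
  obtain ⟨a, ha, b, hb, hab, hqa, hqb⟩ := hq
  have hmid : (1 / 2 : ℝ) • a + (1 / 2 : ℝ) • b ∈ Ω :=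
    hconv (hcl.frontier_subset ha) (hcl.frontier_subset hb) (by norm_num) (by norm_num)
      (by norm_num)
  -- strict convexity of the norm: the midpoint of two nearest points is strictly nearer
  have hlt : dist ((1 / 2 : ℝ) • a + (1 / 2 : ℝ) • b) q < infDist q (frontier Ω) := by
    have := norm_combo_lt_of_ne hqa.le hqb.le (fun h => hab (sub_right_injective h))
      (by norm_num : (0 : ℝ) < 1 / 2) (by norm_num : (0 : ℝ) < 1 / 2) (by norm_num)
    rwa [dist_comm, dist_eq_norm, show q - ((1 / 2 : ℝ) • a + (1 / 2 : ℝ) • b) =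
      (1 / 2 : ℝ) • (q - a) + (1 / 2 : ℝ) • (q - b) by module]
  by_contra hqΩ
  have hball := ball_infDist_frontier_subset (s := Ωᶜ) hqΩ
  rw [frontier_compl] at hball
  exact hball hlt hmid

theorem mem_medialAxis_of_isLocalMin_prox {X : Set 𝔼} (hX : IsCompact X) {c w : 𝔼} {τ : ℝ}
    (hc : c ∈ medialAxis X) (hw : w ∉ X) (hτ : 0 ≤ τ) (hτw : τ ≤ infDist w X)
    (hmin : IsLocalMin (fun y => ‖y - c‖ ^ 2 - 2 * τ * infDist y X) w) : w ∈ medialAxis X := by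
  by_contra hwm
  obtain ⟨y₀, hy₀, hwy₀⟩ := hX.exists_infDist_eq_dist (hc.elim fun a ha => ⟨a, ha.1⟩) w
  have huniq : ∀ y ∈ X, dist w y = infDist w X → y = y₀ := fun y hy hwy => by_contra fun hne =>
    hwm ⟨y, hy, y₀, hy₀, hne, by rw [← dist_eq_norm, hwy], by rw [← dist_eq_norm, hwy₀]⟩
  have hwc := sub_eq_smul_of_isLocalMin_prox
    (hasFDerivAt_infDist_of_unique_s19 hX hw hy₀ hwy₀.symm huniq) hmin
  rw [← hwy₀] at hwc
  -- so `c` lies on the segment from the footprint `y₀` to `w`, at distance `τ` from `w`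
  have hr : 0 < infDist w X := hwy₀ ▸ dist_pos.2 (ne_of_mem_of_not_mem hy₀ hw).symm
  have hwc' : ‖w - c‖ = τ := by
    rw [hwc, norm_smul, norm_smul, norm_inv, ← dist_eq_norm, ← hwy₀, Real.norm_of_nonneg hr.le,
      inv_mul_cancel₀ hr.ne', mul_one, Real.norm_of_nonneg hτ]
  have hcy₀ : dist c y₀ = infDist w X - τ := by
    have : c - y₀ = (1 - τ / infDist w X) • (w - y₀) := by
      rw [show c = w - τ • (infDist w X)⁻¹ • (w - y₀) by rw [← hwc]; abel, smul_smul, sub_smul,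
        one_smul, div_eq_mul_inv]
      abel
    rw [dist_eq_norm, this, norm_smul, ← dist_eq_norm w y₀, ← hwy₀,
      Real.norm_of_nonneg (sub_nonneg.2 ((div_le_one hr).2 hτw))]
    field_simp
  refine hwm (mem_medialAxis_of_norm_sub_add_infDist_le hc ?_)
  linarith [infDist_le_dist_of_mem hy₀ (x := c)]

theorem exists_mem_medialAxis_prox_step {Ω : Set 𝔼} (hcomp : IsCompact Ω) (hconv : Convex ℝ Ω)
    {x c : 𝔼} (hx : x ∈ Ω) (hc : c ∈ medialAxis (frontier Ω)) {τ : ℝ} (hτ : 0 < τ)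
    (hτc : τ ≤ infDist c (frontier Ω)) :
    ∃ w ∈ medialAxis (frontier Ω), infDist c (frontier Ω) ≤ infDist w (frontier Ω) ∧
      infDist w (frontier Ω) ≤ infDist c (frontier Ω) + 2 * τ ∧
      ‖x - w‖ ^ 2 + 2 * τ * (infDist x (frontier Ω) - infDist w (frontier Ω)) ≤ ‖x - c‖ ^ 2 := by
  have hcΩ := hconv.medialAxis_frontier_subset hcomp.isClosed hc
  obtain ⟨w, hwΩ, hmin⟩ := hcomp.exists_isMinOn ⟨c, hcΩ⟩
    (f := fun y => ‖y - c‖ ^ 2 - 2 * τ * infDist y (frontier Ω)) (by fun_prop)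
  have hcw : ‖w - c‖ ^ 2 - 2 * τ * infDist w (frontier Ω) ≤ - (2 * τ * infDist c (frontier Ω)) := by
    simpa using hmin hcΩ
  have hlip : infDist w (frontier Ω) ≤ infDist c (frontier Ω) + ‖w - c‖ :=
    dist_eq_norm w c ▸ infDist_le_infDist_add_dist
  have hfcw : infDist c (frontier Ω) ≤ infDist w (frontier Ω) :=
    le_of_mul_le_mul_left (by nlinarith [sq_nonneg ‖w - c‖]) (mul_pos two_pos hτ)
  have hwc : ‖w - c‖ ≤ 2 * τ := by nlinarith [norm_nonneg (w - c)]
  have hwΓ : w ∉ frontier Ω := fun h =>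
    (infDist_pos_of_mem_medialAxis hc).not_ge (hfcw.trans (infDist_zero_of_mem h).le)
  have hwint : w ∈ interior Ω := by_contra fun h => hwΓ ⟨subset_closure hwΩ, h⟩
  refine ⟨w, mem_medialAxis_of_isLocalMin_prox
    (hcomp.of_isClosed_subset isClosed_frontier hcomp.isClosed.frontier_subset) hc hwΓ hτ.le
    (hτc.trans hfcw)
    (hmin.isLocalMin (mem_interior_iff_mem_nhds.1 hwint)), hfcw, by linarith,
    hmin.norm_sub_sq_add_le_of_concaveOn hconv.concaveOn_infDist_frontier hτ.le hwΩ hx⟩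

theorem infDist_frontier_le_of_mem_medialAxis {Ω : Set 𝔼} (hcomp : IsCompact Ω)
    (hconv : Convex ℝ Ω) {x m : 𝔼} (hx : x ∈ Ω) (hm : m ∈ medialAxis (frontier Ω)) {δ τ : ℝ}
    (hδ : 0 < δ) (hτ : 0 < τ) (hτm : τ ≤ infDist m (frontier Ω)) :
    infDist x (frontier Ω) ≤ infDist m (frontier Ω) +
      (‖x - m‖ ^ 2 - infDist x (medialAxis (frontier Ω)) ^ 2) / δ + δ + 2 * τ := by
  set Γ := frontier Ω
  set ρ := infDist x (medialAxis Γ)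
  by_contra! hlt
  set A := {c | c ∈ medialAxis Γ ∧ infDist m Γ ≤ infDist c Γ ∧
    ‖x - c‖ ^ 2 + δ * infDist c Γ ≤ ‖x - m‖ ^ 2 + δ * infDist m Γ}
  have hbound : ∀ c ∈ A, infDist c Γ ≤ infDist m Γ + (‖x - m‖ ^ 2 - ρ ^ 2) / δ := by
    rintro c ⟨hc, -, hP⟩
    have hρ : ρ ^ 2 ≤ ‖x - c‖ ^ 2 := pow_le_pow_left₀ infDist_nonneg
      ((infDist_le_dist_of_mem hc).trans_eq (dist_eq_norm x c)) 2
    rw [← sub_le_iff_le_add', le_div_iff₀ hδ]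
    nlinarith
  have hdesc : ∀ c ∈ A, ∃ c' ∈ A, ‖x - c'‖ ^ 2 ≤ ‖x - c‖ ^ 2 - 2 * τ * δ := by
    intro c hcA
    have hbc := hbound c hcA
    obtain ⟨hc, hmc, hP⟩ := hcA
    obtain ⟨w, hw, hcw, hwc, hdrift⟩ :=
      exists_mem_medialAxis_prox_step hcomp hconv hx hc hτ (hτm.trans hmc)
    have hgap : δ ≤ infDist x Γ - infDist w Γ := by linarith
    have hgap' : 2 * τ * δ ≤ 2 * τ * (infDist x Γ - infDist w Γ) := by gcongr
    exact ⟨w, ⟨hw, hmc.trans hcw, by nlinarith⟩, by linarith⟩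
  -- the values `‖x - c‖²` on `A` are bounded below, so they cannot all drop by `2τδ`
  set S := (fun c => ‖x - c‖ ^ 2) '' A
  obtain ⟨_, ⟨c, hcA, rfl⟩, hc⟩ :=
    Real.lt_sInf_add_pos (⟨_, m, ⟨hm, le_rfl, le_rfl⟩, rfl⟩ : S.Nonempty)
      (by positivity : 0 < 2 * τ * δ)
  obtain ⟨c', hc'A, hc'⟩ := hdesc c hcA
  have hbdd : BddBelow S := ⟨0, by rintro _ ⟨_, _, rfl⟩; positivity⟩
  have := csInf_le hbdd (mem_image_of_mem _ hc'A)
  simp only at hc this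
  linarith

end Euclidean

theorem footprint_on_cut_locus_farther_from_boundary_general
    (n : ℕ) (Ω : Set (EuclideanSpace ℝ (Fin n)))
    (hcomp : IsCompact Ω) (hconv : Convex ℝ Ω)
    (x : EuclideanSpace ℝ (Fin n)) (hx : x ∈ interior Ω)
    (x₀ : EuclideanSpace ℝ (Fin n)) (hx₀ : x₀ ∈ cutLocus (frontier Ω))
    (hnear : ‖x - x₀‖ = Metric.infDist x (cutLocus (frontier Ω))) :
    Metric.infDist x (frontier Ω) ≤ Metric.infDist x₀ (frontier Ω) := by
  have hρ : infDist x (medialAxis (frontier Ω)) = ‖x - x₀‖ := by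
    rw [hnear, cutLocus, infDist_closure]
  refine le_of_forall_pos_le_add fun δ hδ => ?_
  have hmedial : ∀ m ∈ medialAxis (frontier Ω), infDist x (frontier Ω) ≤
      infDist m (frontier Ω) + (‖x - m‖ ^ 2 - ‖x - x₀‖ ^ 2) / δ + δ := by
    intro m hm
    refine le_of_forall_pos_le_add fun ε hε => ?_
    have := infDist_frontier_le_of_mem_medialAxis hcomp hconv (interior_subset hx) hm hδ
      (lt_min (half_pos hε) (infDist_pos_of_mem_medialAxis hm)) (min_le_right _ _)
    rw [hρ] at this
    linarith [min_le_left (ε / 2) (infDist m (frontier Ω))]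
  have hclosed : IsClosed {m | infDist x (frontier Ω) ≤
      infDist m (frontier Ω) + (‖x - m‖ ^ 2 - ‖x - x₀‖ ^ 2) / δ + δ} :=
    isClosed_le continuous_const (by fun_prop)
  simpa using hclosed.closure_subset_iff.2 hmedial hx₀

/-- Let `Ω ⊆ ℝⁿ` (`n ≥ 2`) be a compact convex set with nonempty interior
and boundary `Γ = ∂Ω`.  If `x` is an interior point of `Ω` and `x⁰` is a nearest point of
`x` on `cut(Γ)`, then `d_Γ(x⁰) ≥ d_Γ(x)`. -/
theorem footprint_on_cut_locus_farther_from_boundary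
    (n : ℕ) (hn : 2 ≤ n) (Ω : Set (EuclideanSpace ℝ (Fin n)))
    (hcomp : IsCompact Ω) (hconv : Convex ℝ Ω) (hint : (interior Ω).Nonempty)
    (x : EuclideanSpace ℝ (Fin n)) (hx : x ∈ interior Ω)
    (x₀ : EuclideanSpace ℝ (Fin n)) (hx₀ : x₀ ∈ cutLocus (frontier Ω))
    (hnear : ‖x - x₀‖ = Metric.infDist x (cutLocus (frontier Ω))) :
    Metric.infDist x (frontier Ω) ≤ Metric.infDist x₀ (frontier Ω) :=
  footprint_on_cut_locus_farther_from_boundary_general n Ω hcomp hconv x hx x₀ hx₀ hnear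
end
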